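/- arXiv:2205.07685 — 8 statements merged into one kernel-verified Lean document; each statement's English description precedes it below -/
import Mathlib

section
/- Let d ≥ 2. The following four subsets of de Sitter space dS^d coincide: (a) the wedge W = {x ∈ dS^d : x 1 > |x 0|}; (b) the positivity domain {x ∈ dS^d : h x ∈ V₊} of the boost vector field; (c) the KMS domain {x ∈ dS^d : for all t ∈ (0,π), α_{it}(x) ∈ T_M}; (d) the Wick-rotated fixed-point set κ_h({z ∈ T_M : τ̄_h(z) = z}). -/
/- STATEMENT 0: The four wedge-domain descriptions in de Sitter space dS^d coincide
   (Proposition on de Sitter space, d ≥ 2). -/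

open Complex Set

noncomputable section

/-- The Lorentzian form `[x,y] = x 0 * y 0 - ∑_{j=1}^d x j * y j` on `ℝ^{d+1}`. -/
def lorR (d : ℕ) (x y : Fin (d + 1) → ℝ) : ℝ :=
  2 * (x 0 * y 0) - ∑ j, x j * y j

/-- The complex-bilinear extension of the Lorentzian form to `ℂ^{d+1}`. -/
def lorC (d : ℕ) (x y : Fin (d + 1) → ℂ) : ℂ :=
  2 * (x 0 * y 0) - ∑ j, x j * y j

/-- The open future light cone `V₊`. -/
def Vplus (d : ℕ) : Set (Fin (d + 1) → ℝ) :=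
  {x | 0 < x 0 ∧ 0 < lorR d x x}

/-- The boost generator `h`: `(hx) 0 = x 1`, `(hx) 1 = x 0`, `(hx) j = 0` for `j ≥ 2`. -/
def boost (d : ℕ) (x : Fin (d + 1) → ℝ) : Fin (d + 1) → ℝ :=
  fun j => if j = 0 then x 1 else if j = 1 then x 0 else 0

/-- The complex boost flow `α_z`. -/
def boostFlowC (d : ℕ) (z : ℂ) (v : Fin (d + 1) → ℂ) : Fin (d + 1) → ℂ :=
  fun j =>
    if j = 0 then Complex.cosh z * v 0 + Complex.sinh z * v 1
    else if j = 1 then Complex.cosh z * v 1 + Complex.sinh z * v 0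
    else v j

/-- The antilinear involution `τ̄_h`. -/
def tauBar (d : ℕ) (z : Fin (d + 1) → ℂ) : Fin (d + 1) → ℂ :=
  fun j =>
    if j = 0 then -(starRingEnd ℂ) (z 0)
    else if j = 1 then -(starRingEnd ℂ) (z 1)
    else (starRingEnd ℂ) (z j)

/-- The Wick rotation `κ_h`. -/
def kappa (d : ℕ) (z : Fin (d + 1) → ℂ) : Fin (d + 1) → ℂ :=
  fun j =>
    if j = 0 then -Complex.I * z 1
    else if j = 1 then -Complex.I * z 0
    else z j

/-- De Sitter space `dS^d`. -/
def deSitter (d : ℕ) : Set (Fin (d + 1) → ℝ) := {x | lorR d x x = -1}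

/-- The tube domain `T_M` of de Sitter space. -/
def tubeM (d : ℕ) : Set (Fin (d + 1) → ℂ) :=
  {z | lorC d z z = -1 ∧ (fun j => (z j).im) ∈ Vplus d}

/-- The coordinatewise embedding `ℝ^{d+1} → ℂ^{d+1}`. -/
def embedC (d : ℕ) (x : Fin (d + 1) → ℝ) : Fin (d + 1) → ℂ := fun j => (x j : ℂ)

/-! Everything reduces to the boost condition `h x ∈ V₊`. The flow `α_{it}` preserves `[·,·]`
and `Im α_{it}(x) = sin t · h x` for real `x`, so for `t ∈ (0, π)` the KMS condition is
`h x ∈ V₊`. A `τ̄_h`-fixed point is `z = (i x₁, i x₀, x₂, …)` with `x` real, and then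
`κ_h z = x`, `[z,z] = [x,x]` and `Im z = h x`. Finally `h x ∈ V₊` says `x₁ > 0` and
`x₁² > x₀²`. -/

section Lorentz

variable {d n : ℕ}

lemma lorR_self_eq (x : Fin (n + 2) → ℝ) :
    lorR (n + 1) x x = x 0 ^ 2 - x 1 ^ 2 - ∑ j : Fin n, x j.succ.succ ^ 2 := by
  simp only [lorR, Fin.sum_univ_succ, Fin.succ_zero_eq_one, ← sq]
  ring

lemma lorC_self_eq (z : Fin (n + 2) → ℂ) :
    lorC (n + 1) z z = z 0 ^ 2 - z 1 ^ 2 - ∑ j : Fin n, z j.succ.succ ^ 2 := by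
  simp only [lorC, Fin.sum_univ_succ, Fin.succ_zero_eq_one, ← sq]
  ring

lemma lorR_smul_smul (s : ℝ) (x : Fin (d + 1) → ℝ) :
    lorR d (s • x) (s • x) = s ^ 2 * lorR d x x := by
  simp only [lorR, Pi.smul_apply, smul_eq_mul, mul_mul_mul_comm s, ← Finset.mul_sum]
  ring

lemma smul_mem_Vplus_iff {s : ℝ} (hs : 0 < s) (x : Fin (d + 1) → ℝ) :
    s • x ∈ Vplus d ↔ x ∈ Vplus d := by
  simp only [Vplus, mem_ofPred_eq, lorR_smul_smul, Pi.smul_apply, smul_eq_mul,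
    mul_pos_iff_of_pos_left hs, mul_pos_iff_of_pos_left (pow_pos hs 2)]

lemma lorC_embedC (x : Fin (d + 1) → ℝ) :
    lorC d (embedC d x) (embedC d x) = lorR d x x := by
  simp only [lorC, lorR, embedC]
  push_cast
  ring

lemma lorR_boost (x : Fin (n + 2) → ℝ) :
    lorR (n + 1) (boost (n + 1) x) (boost (n + 1) x) = x 1 ^ 2 - x 0 ^ 2 := by
  simp [lorR_self_eq, boost, Fin.succ_ne_zero, Fin.succ_succ_ne_one]

lemma boost_mem_Vplus_iff (x : Fin (n + 2) → ℝ) :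
    boost (n + 1) x ∈ Vplus (n + 1) ↔ |x 0| < x 1 := by
  have h0 : boost (n + 1) x 0 = x 1 := rfl
  simp only [Vplus, mem_ofPred_eq, lorR_boost, h0, sub_pos]
  constructor
  · rintro ⟨hpos, hsq⟩
    exact abs_lt_of_sq_lt_sq hsq hpos.le
  · intro h
    exact ⟨(abs_nonneg _).trans_lt h, sq_lt_sq' (abs_lt.mp h).1 (abs_lt.mp h).2⟩

end Lorentz

section BoostFlow

variable {n : ℕ}

lemma lorC_boostFlowC (w : ℂ) (z : Fin (n + 2) → ℂ) :
    lorC (n + 1) (boostFlowC (n + 1) w z) (boostFlowC (n + 1) w z) = lorC (n + 1) z z := by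
  simp only [lorC_self_eq, boostFlowC, Fin.succ_ne_zero, Fin.succ_succ_ne_one, one_ne_zero,
    if_true, if_false]
  linear_combination (z 0 ^ 2 - z 1 ^ 2) * Complex.cosh_sq_sub_sinh_sq w

lemma im_boostFlowC_mul_I (t : ℝ) (x : Fin (n + 2) → ℝ) :
    (fun j => (boostFlowC (n + 1) (t * I) (embedC (n + 1) x) j).im) =
      Real.sin t • boost (n + 1) x := by
  ext j
  refine Fin.cases ?_ (Fin.cases ?_ fun j => ?_) j <;>
    simp [boostFlowC, boost, embedC, Fin.succ_ne_zero, Fin.succ_succ_ne_one, cosh_mul_I,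
      sinh_mul_I, sin_ofReal_re]

lemma boostFlowC_mul_I_mem_tubeM_iff (t : ℝ) (x : Fin (n + 2) → ℝ) :
    boostFlowC (n + 1) (t * I) (embedC (n + 1) x) ∈ tubeM (n + 1) ↔
      x ∈ deSitter (n + 1) ∧ Real.sin t • boost (n + 1) x ∈ Vplus (n + 1) := by
  rw [tubeM, mem_ofPred_eq, lorC_boostFlowC, lorC_embedC, im_boostFlowC_mul_I, deSitter,
    mem_ofPred_eq]
  exact_mod_cast Iff.rfl

end BoostFlow

section WickRotation

variable {n : ℕ}

/-- The inverse Wick rotation `κ_h⁻¹` on real points. -/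
def kappaLift (d : ℕ) (x : Fin (d + 1) → ℝ) : Fin (d + 1) → ℂ :=
  fun j => if j = 0 then x 1 * I else if j = 1 then x 0 * I else x j

lemma kappa_kappaLift (x : Fin (n + 2) → ℝ) :
    kappa (n + 1) (kappaLift (n + 1) x) = embedC (n + 1) x := by
  ext j
  refine Fin.cases ?_ (Fin.cases ?_ fun j => ?_) j <;>
    simp [kappa, kappaLift, embedC, Fin.succ_ne_zero, Fin.succ_succ_ne_one, mul_left_comm I]

lemma tauBar_eq_self_iff (z : Fin (n + 2) → ℂ) :
    tauBar (n + 1) z = z ↔ ∃ x, kappaLift (n + 1) x = z := by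
  constructor
  · intro h
    refine ⟨fun j => (kappa (n + 1) z j).re, funext fun j => ?_⟩
    have hj := Complex.ext_iff.mp (congrFun h j)
    induction j using Fin.cases with
    | zero => simp_all [tauBar, kappa, kappaLift, Complex.ext_iff]; linarith
    | succ j =>
      induction j using Fin.cases with
      | zero => simp_all [tauBar, kappa, kappaLift, Complex.ext_iff]; linarith
      | succ j =>
        simp_all [tauBar, kappa, kappaLift, Complex.ext_iff, Fin.succ_ne_zero,
          Fin.succ_succ_ne_one]
        linarith
  · rintro ⟨x, rfl⟩
    ext j
    refine Fin.cases ?_ (Fin.cases ?_ fun j => ?_) j <;>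
      simp [tauBar, kappaLift, Fin.succ_ne_zero, Fin.succ_succ_ne_one]

lemma im_kappaLift (x : Fin (n + 2) → ℝ) :
    (fun j => (kappaLift (n + 1) x j).im) = boost (n + 1) x := by
  ext j
  refine Fin.cases ?_ (Fin.cases ?_ fun j => ?_) j <;>
    simp [kappaLift, boost, Fin.succ_ne_zero, Fin.succ_succ_ne_one]

lemma lorC_kappaLift (x : Fin (n + 2) → ℝ) :
    lorC (n + 1) (kappaLift (n + 1) x) (kappaLift (n + 1) x) = lorR (n + 1) x x := by
  simp [lorC_self_eq, lorR_self_eq, kappaLift, Fin.succ_ne_zero, Fin.succ_succ_ne_one]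
  linear_combination ((x 1 : ℂ) ^ 2 - (x 0 : ℂ) ^ 2) * I_sq

lemma kappaLift_mem_tubeM_iff (x : Fin (n + 2) → ℝ) :
    kappaLift (n + 1) x ∈ tubeM (n + 1) ↔
      x ∈ deSitter (n + 1) ∧ boost (n + 1) x ∈ Vplus (n + 1) := by
  rw [tubeM, mem_ofPred_eq, lorC_kappaLift, im_kappaLift, deSitter, mem_ofPred_eq]
  exact_mod_cast Iff.rfl

lemma image_kappaLift :
    kappaLift (n + 1) '' {x ∈ deSitter (n + 1) | boost (n + 1) x ∈ Vplus (n + 1)} =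
      {z ∈ tubeM (n + 1) | tauBar (n + 1) z = z} := by
  ext z
  simp only [mem_image, mem_sep_iff, tauBar_eq_self_iff]
  constructor
  · rintro ⟨x, hx, rfl⟩
    exact ⟨(kappaLift_mem_tubeM_iff x).mpr hx, x, rfl⟩
  · rintro ⟨hz, x, rfl⟩
    exact ⟨x, (kappaLift_mem_tubeM_iff x).mp hz, rfl⟩

end WickRotation

theorem deSitter_wedge_descriptions (d : ℕ) (hd : 2 ≤ d) :
    ({x ∈ deSitter d | |x 0| < x 1} = {x ∈ deSitter d | boost d x ∈ Vplus d}) ∧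
    ({x ∈ deSitter d | |x 0| < x 1} =
      {x ∈ deSitter d |
        ∀ t ∈ Ioo (0 : ℝ) Real.pi, boostFlowC d (t * Complex.I) (embedC d x) ∈ tubeM d}) ∧
    (embedC d '' {x ∈ deSitter d | |x 0| < x 1} =
      kappa d '' {z ∈ tubeM d | tauBar d z = z}) := by
  obtain ⟨n, rfl⟩ : ∃ n, d = n + 1 := ⟨d - 1, by omega⟩
  have wedge_eq : {x ∈ deSitter (n + 1) | |x 0| < x 1} =
      {x ∈ deSitter (n + 1) | boost (n + 1) x ∈ Vplus (n + 1)} := by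
    simp only [boost_mem_Vplus_iff]
  refine ⟨wedge_eq, ?_, ?_⟩
  · rw [wedge_eq]
    ext x
    simp only [mem_sep_iff, boostFlowC_mul_I_mem_tubeM_iff]
    refine and_congr_right fun hx => ⟨fun hb t ht => ⟨hx, ?_⟩, fun h => ?_⟩
    · exact (smul_mem_Vplus_iff (Real.sin_pos_of_pos_of_lt_pi ht.1 ht.2) _).mpr hb
    · have hpi : Real.pi / 2 ∈ Ioo 0 Real.pi := ⟨by positivity, by linarith [Real.pi_pos]⟩
      simpa only [Real.sin_pi_div_two, one_smul] using (h _ hpi).2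
  · rw [wedge_eq, ← image_kappaLift, image_image]
    simp only [kappa_kappaLift]

end
end

section
/- Let V be a finite-dimensional real vector space, β a nondegenerate symmetric bilinear form on V, c ∈ ℝ with c ≠ 0, and Q_c = {v ∈ V : β(v,v) = c}. For p ∈ Q_c and v ∈ V with β(p,v) = 0, define γ : ℝ → V by γ(t) = C(t²·β(v,v)/c)·p + t·S(t²·β(v,v)/c)·v. Then: (i) γ(t) ∈ Q_c for all t ∈ ℝ; (ii) γ(0) = p and γ has derivative v at t = 0; (iii) γ(2t − s) = s_{γ(t)}(γ(s)) for all t, s ∈ ℝ. In other words, γ is the geodesic of the symmetric space Q_c through p with initial velocity v, so the exponential function of Q_c is Exp_p(v) = C(β(v,v)/β(p,p))·p + S(β(v,v)/β(p,p))·v. -/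
/-!
Put `κ = β(v,v)/c` and pick `μ ∈ ℂ` with `μ² = κ`. Comparing power series, the coefficients of
`γ` are `C(t²κ) = cos(μt)` and `t·S(t²κ) = sin(μt)/μ`. As `p ⊥ v` and `β(v,v) = κ·β(p,p)`, the
addition formula for `cos` gives `β(γ t, γ s) = c·cos(μ(t - s))`: at `s = t` this is (i), and it
turns (iii) into the sum-to-product formulas `cos x + cos y = 2 cos((x+y)/2) cos((x-y)/2)` and
`sin x + sin y = 2 sin((x+y)/2) cos((x-y)/2)`.
-/

noncomputable section

/-- `C(z) = ∑_{k=0}^∞ (−1)^k z^k/(2k)!`, so that `cos z = C(z²)`. -/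
def Cfun (z : ℝ) : ℝ := ∑' k : ℕ, (-1 : ℝ) ^ k * z ^ k / (Nat.factorial (2 * k))

/-- `S(z) = ∑_{k=0}^∞ (−1)^k z^k/(2k+1)!`, so that `sin z = z·S(z²)`. -/
def Sfun (z : ℝ) : ℝ := ∑' k : ℕ, (-1 : ℝ) ^ k * z ^ k / (Nat.factorial (2 * k + 1))

lemma Cfun_eq_cos {z : ℝ} {μ : ℂ} (hμ : μ ^ 2 = z) : (Cfun z : ℂ) = Complex.cos μ := by
  rw [Cfun, Complex.ofReal_tsum, ← (Complex.hasSum_cos μ).tsum_eq]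
  refine tsum_congr fun k => ?_
  rw [pow_mul, hμ]
  push_cast
  ring

lemma Sfun_mul_eq_sin {z : ℝ} {μ : ℂ} (hμ : μ ^ 2 = z) : (Sfun z : ℂ) * μ = Complex.sin μ := by
  rw [Sfun, Complex.ofReal_tsum, ← tsum_mul_right, ← (Complex.hasSum_sin μ).tsum_eq]
  refine tsum_congr fun k => ?_
  rw [pow_succ, pow_mul, hμ]
  push_cast
  ring

lemma Cfun_zero : Cfun 0 = 1 := by
  exact_mod_cast (Cfun_eq_cos (μ := 0) (by simp)).trans Complex.cos_zero

lemma Sfun_zero : Sfun 0 = 1 := by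
  rw [Sfun, tsum_eq_single 0 fun k hk => by simp [hk]]
  simp

/-- The cosine of curvature `κ`: `cos(√κ t)`, which is `cosh(√-κ t)` when `κ < 0`. -/
def cosK (κ t : ℝ) : ℝ := Cfun (t ^ 2 * κ)

/-- The sine of curvature `κ`: `sin(√κ t)/√κ`, which is `sinh(√-κ t)/√-κ` when `κ < 0`, and `t`
when `κ = 0`. -/
def sinK (κ t : ℝ) : ℝ := t * Sfun (t ^ 2 * κ)

@[simp] lemma cosK_zero_left (t : ℝ) : cosK 0 t = 1 := by simp [cosK, Cfun_zero]

@[simp] lemma sinK_zero_left (t : ℝ) : sinK 0 t = t := by simp [sinK, Sfun_zero]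

@[simp] lemma cosK_zero_right (κ : ℝ) : cosK κ 0 = 1 := by simp [cosK, Cfun_zero]

@[simp] lemma sinK_zero_right (κ : ℝ) : sinK κ 0 = 0 := by simp [sinK]

section Complex

variable {κ : ℝ} {μ : ℂ}

lemma cosK_eq_cos (hμ : μ ^ 2 = κ) (t : ℝ) : (cosK κ t : ℂ) = Complex.cos (t * μ) :=
  Cfun_eq_cos (by push_cast; rw [mul_pow, hμ])

lemma sinK_mul_eq_sin (hμ : μ ^ 2 = κ) (t : ℝ) : (sinK κ t : ℂ) * μ = Complex.sin (t * μ) := by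
  rw [sinK, Complex.ofReal_mul, mul_comm (t : ℂ), mul_assoc,
    Sfun_mul_eq_sin (by push_cast; rw [mul_pow, hμ])]

lemma exists_sq_eq_ofReal (κ : ℝ) : ∃ μ : ℂ, μ ^ 2 = κ :=
  IsAlgClosed.exists_pow_nat_eq _ two_pos

lemma exists_sq_eq_ofReal_of_ne_zero (hκ : κ ≠ 0) : ∃ μ : ℂ, μ ^ 2 = κ ∧ μ ≠ 0 := by
  obtain ⟨μ, hμ⟩ := exists_sq_eq_ofReal κ
  refine ⟨μ, hμ, ?_⟩
  rintro rfl
  exact hκ (by exact_mod_cast hμ.symm.trans (zero_pow two_ne_zero))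

end Complex

lemma cosK_sub (κ t s : ℝ) :
    cosK κ (t - s) = cosK κ t * cosK κ s + κ * sinK κ t * sinK κ s := by
  obtain ⟨μ, hμ⟩ := exists_sq_eq_ofReal κ
  apply Complex.ofReal_injective
  push_cast
  rw [cosK_eq_cos hμ, cosK_eq_cos hμ, cosK_eq_cos hμ, Complex.ofReal_sub, sub_mul,
    Complex.cos_sub, ← sinK_mul_eq_sin hμ, ← sinK_mul_eq_sin hμ, ← hμ]
  ring

lemma cosK_two_mul_sub (κ t s : ℝ) :
    cosK κ (2 * t - s) = 2 * cosK κ (t - s) * cosK κ t - cosK κ s := by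
  obtain ⟨μ, hμ⟩ := exists_sq_eq_ofReal κ
  apply Complex.ofReal_injective
  push_cast
  simp only [cosK_eq_cos hμ]
  rw [eq_sub_iff_add_eq, Complex.cos_add_cos]
  push_cast
  ring_nf

lemma sinK_two_mul_sub (κ t s : ℝ) :
    sinK κ (2 * t - s) = 2 * cosK κ (t - s) * sinK κ t - sinK κ s := by
  rcases eq_or_ne κ 0 with rfl | hκ
  · simp
  obtain ⟨μ, hμ, hμ0⟩ := exists_sq_eq_ofReal_of_ne_zero hκ
  apply Complex.ofReal_injective
  apply mul_right_cancel₀ hμ0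
  push_cast
  rw [sub_mul, mul_assoc, sinK_mul_eq_sin hμ, sinK_mul_eq_sin hμ, sinK_mul_eq_sin hμ,
    cosK_eq_cos hμ, eq_sub_iff_add_eq, Complex.sin_add_sin]
  push_cast
  ring_nf

lemma hasDerivAt_cosK_zero (κ : ℝ) : HasDerivAt (cosK κ) 0 0 := by
  obtain ⟨μ, hμ⟩ := exists_sq_eq_ofReal κ
  have h := ((hasDerivAt_mul_const (x := (0 : ℂ)) μ).ccos).real_of_complex
  convert h using 1
  · ext t
    rw [← cosK_eq_cos hμ]
    rfl
  · simp

lemma hasDerivAt_sinK_zero (κ : ℝ) : HasDerivAt (sinK κ) 1 0 := by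
  rcases eq_or_ne κ 0 with rfl | hκ
  · rw [show sinK 0 = id from funext sinK_zero_left]
    exact hasDerivAt_id 0
  obtain ⟨μ, hμ, hμ0⟩ := exists_sq_eq_ofReal_of_ne_zero hκ
  have h := (((hasDerivAt_mul_const (x := (0 : ℂ)) μ).csin).div_const μ).real_of_complex
  convert h using 1
  · ext t
    rw [← sinK_mul_eq_sin hμ, mul_div_cancel_right₀ _ hμ0]
    rfl
  · simp [hμ0]

lemma LinearMap.apply_smul_add_smul_of_orthogonal {R M : Type*} [CommSemiring R]
    [AddCommMonoid M] [Module R M] {β : M →ₗ[R] M →ₗ[R] R} {p v : M}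
    (hpv : β p v = 0) (hvp : β v p = 0) (a b a' b' : R) :
    β (a • p + b • v) (a' • p + b' • v) = a * a' * β p p + b * b' * β v v := by
  simp only [map_add, map_smul, LinearMap.add_apply, LinearMap.smul_apply, smul_eq_mul, hpv, hvp]
  ring

def quadricGeodesic {V : Type*} [AddCommGroup V] [Module ℝ V] (κ : ℝ) (p v : V) (t : ℝ) : V :=
  cosK κ t • p + sinK κ t • v

section Geodesic

variable {V : Type*} [AddCommGroup V] [Module ℝ V] (κ : ℝ) (p v : V)

@[simp] lemma quadricGeodesic_zero : quadricGeodesic κ p v 0 = p := by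
  simp [quadricGeodesic]

lemma quadricGeodesic_two_mul_sub (t s : ℝ) :
    quadricGeodesic κ p v (2 * t - s) =
      -quadricGeodesic κ p v s + (2 * cosK κ (t - s)) • quadricGeodesic κ p v t := by
  simp only [quadricGeodesic, cosK_two_mul_sub, sinK_two_mul_sub]
  module

variable {κ p v} {β : V →ₗ[ℝ] V →ₗ[ℝ] ℝ}

lemma apply_quadricGeodesic (hpv : β p v = 0) (hvp : β v p = 0) (hv : β v v = κ * β p p)
    (t s : ℝ) :
    β (quadricGeodesic κ p v t) (quadricGeodesic κ p v s) = β p p * cosK κ (t - s) := by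
  rw [quadricGeodesic, quadricGeodesic, β.apply_smul_add_smul_of_orthogonal hpv hvp, hv,
    cosK_sub]
  ring

end Geodesic

lemma hasDerivAt_quadricGeodesic_zero {V : Type*} [NormedAddCommGroup V] [NormedSpace ℝ V]
    (κ : ℝ) (p v : V) : HasDerivAt (quadricGeodesic κ p v) v 0 := by
  have h := ((hasDerivAt_cosK_zero κ).smul_const p).add ((hasDerivAt_sinK_zero κ).smul_const v)
  rwa [zero_smul, one_smul, zero_add] at h

theorem quadric_geodesics_general
    {V : Type*} [NormedAddCommGroup V] [NormedSpace ℝ V]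
    (β : V →ₗ[ℝ] V →ₗ[ℝ] ℝ)
    (hβsymm : ∀ v w, β v w = β w v)
    (c : ℝ) (hc : c ≠ 0)
    (p v : V) (hp : β p p = c) (hpv : β p v = 0)
    (γ : ℝ → V)
    (hγ : ∀ t, γ t = Cfun (t ^ 2 * β v v / c) • p + (t * Sfun (t ^ 2 * β v v / c)) • v) :
    (∀ t, β (γ t) (γ t) = c) ∧
    (γ 0 = p ∧ HasDerivAt γ v 0) ∧
    (∀ t s : ℝ, γ (2 * t - s) = -(γ s) + (2 * β (γ t) (γ s) / β (γ t) (γ t)) • γ t) := by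
  set κ := β v v / c
  have hγκ : γ = quadricGeodesic κ p v := funext fun t => by rw [hγ, mul_div_assoc]; rfl
  have hv : β v v = κ * β p p := by rw [hp, div_mul_cancel₀ _ hc]
  have hβγ := apply_quadricGeodesic hpv ((hβsymm v p).trans hpv) hv
  subst hγκ
  have hγγ (t : ℝ) : β (quadricGeodesic κ p v t) (quadricGeodesic κ p v t) = c := by
    rw [hβγ, sub_self, cosK_zero_right, mul_one, hp]
  refine ⟨hγγ, ⟨quadricGeodesic_zero κ p v, hasDerivAt_quadricGeodesic_zero κ p v⟩, fun t s => ?_⟩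
  rw [hγγ, hβγ, hp, mul_div_assoc, mul_div_cancel_left₀ _ hc, quadricGeodesic_two_mul_sub]

theorem quadric_geodesics
    {V : Type*} [NormedAddCommGroup V] [NormedSpace ℝ V] [FiniteDimensional ℝ V]
    (β : V →ₗ[ℝ] V →ₗ[ℝ] ℝ)
    (hβsymm : ∀ v w, β v w = β w v)
    (hβnondeg : ∀ v, (∀ w, β v w = 0) → v = 0)
    (c : ℝ) (hc : c ≠ 0)
    (p v : V) (hp : β p p = c) (hpv : β p v = 0)
    (γ : ℝ → V)
    (hγ : ∀ t, γ t = Cfun (t ^ 2 * β v v / c) • p + (t * Sfun (t ^ 2 * β v v / c)) • v) :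
    (∀ t, β (γ t) (γ t) = c) ∧
    (γ 0 = p ∧ HasDerivAt γ v 0) ∧
    (∀ t s : ℝ, γ (2 * t - s) = -(γ s) + (2 * β (γ t) (γ s) / β (γ t) (γ t)) • γ t) :=
  quadric_geodesics_general β hβsymm c hc p v hp hpv γ hγ

end
end

section
/- Let V be a finite-dimensional real vector space, β a nondegenerate symmetric bilinear form on V, c ∈ ℝ with c ≠ 0, and Q_c = {v ∈ V : β(v,v) = c}. Then for all x, y ∈ Q_c: (i) s_x maps Q_c into Q_c; (ii) s_x ∘ s_x is the identity on V; (iii) s_x(s_y(z)) = s_{s_x(y)}(s_x(z)) for all z ∈ Q_c; (iv) the fixed-point set of s_x in Q_c is exactly {x, −x}, so x is an isolated fixed point of s_x. Hence (Q_c, μ) with μ(x,y) = s_x(y) is a symmetric space in the sense of Loos. -/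
/-!
Up to sign, `s_x` is the orthogonal reflection in the hyperplane `x^⊥`, so it is a linear
involution preserving `β` (hence every quadric). Linearity and isometry give the conjugation rule
`s_x (s_y z) = s_x (-z + a • y) = -s_x z + a • s_x y = s_{s_x y} (s_x z)`, where
`a = 2 β(y,z)/β(y,y) = 2 β(s_x y, s_x z)/β(s_x y, s_x y)`. A fixed point of `s_x` satisfies
`2 w = a • x`, hence is a multiple `t • x`, and on the quadric through `x` this forces `t² = 1`.
-/

namespace LinearMap.BilinForm

variable {K V : Type*} [Field K] [AddCommGroup V] [Module K V]

def pointReflection (β : LinearMap.BilinForm K V) (x : V) : V →ₗ[K] V :=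
  (2 / β x x) • (β x).smulRight x - LinearMap.id

variable {β : LinearMap.BilinForm K V} {x : V}

theorem pointReflection_apply (y : V) :
    β.pointReflection x y = -y + (2 * β x y / β x x) • x := by
  simp only [pointReflection, LinearMap.sub_apply, LinearMap.smul_apply, smulRight_apply,
    id_apply, smul_smul]
  rw [div_mul_eq_mul_div, neg_add_eq_sub]

theorem pointReflection_self (hx : β x x ≠ 0) : β.pointReflection x x = x := by
  rw [pointReflection_apply, mul_div_assoc, div_self hx, mul_one, two_smul, neg_add_cancel_left]

theorem pointReflection_pointReflection (hx : β x x ≠ 0) (z : V) :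
    β.pointReflection x (β.pointReflection x z) = z := by
  simp only [map_add, map_neg, map_smul, pointReflection_self hx, pointReflection_apply]
  module

theorem apply_pointReflection_pointReflection (hβ : β.IsSymm) (hx : β x x ≠ 0) (u v : V) :
    β (β.pointReflection x u) (β.pointReflection x v) = β u v := by
  simp only [pointReflection_apply, map_add, map_neg, map_smul, LinearMap.add_apply,
    LinearMap.neg_apply, LinearMap.smul_apply, smul_eq_mul, hβ.eq u x]
  field_simp
  ring

theorem pointReflection_pointReflection_eq (hβ : β.IsSymm) (hx : β x x ≠ 0) (y z : V) :
    β.pointReflection x (β.pointReflection y z) =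
      β.pointReflection (β.pointReflection x y) (β.pointReflection x z) := by
  rw [pointReflection_apply (β.pointReflection x z), apply_pointReflection_pointReflection hβ hx,
    apply_pointReflection_pointReflection hβ hx, pointReflection_apply z, map_add, map_neg,
    map_smul]

theorem pointReflection_eq_self_iff [NeZero (2 : K)] (hx : β x x ≠ 0) {w : V} :
    β.pointReflection x w = w ↔ ∃ t : K, t • x = w := by
  constructor
  · intro hw
    refine ⟨β x w / β x x, ?_⟩
    rw [pointReflection_apply] at hw
    have h2 : (2 : K) • w = (2 : K) • (β x w / β x x) • x := by
      linear_combination (norm := module) -hw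
    exact (smul_right_injective V (NeZero.ne (2 : K)) h2).symm
  · rintro ⟨t, rfl⟩
    rw [map_smul, pointReflection_self hx]

theorem apply_smul_smul_eq_self_iff (hx : β x x ≠ 0) (t : K) :
    β (t • x) (t • x) = β x x ↔ t = 1 ∨ t = -1 := by
  rw [map_smul, map_smul, LinearMap.smul_apply, smul_eq_mul, smul_eq_mul, ← mul_assoc,
    mul_eq_right₀ hx, mul_self_eq_one_iff]

theorem setOf_fixed_pointReflection [NeZero (2 : K)] (hx : β x x ≠ 0) :
    {w | β w w = β x x ∧ β.pointReflection x w = w} = {x, -x} := by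
  ext w
  simp only [Set.mem_ofPred_eq, Set.mem_insert_iff, Set.mem_singleton_iff,
    pointReflection_eq_self_iff hx]
  constructor
  · rintro ⟨hw, t, rfl⟩
    rcases (apply_smul_smul_eq_self_iff hx t).mp hw with rfl | rfl
    · exact .inl (one_smul K x)
    · exact .inr (neg_one_smul K x)
  · rintro (rfl | rfl)
    · exact ⟨rfl, 1, one_smul K _⟩
    · exact ⟨by simp, -1, neg_one_smul K _⟩

end LinearMap.BilinForm

open LinearMap.BilinForm

theorem quadric_is_symmetric_space_general
    {V : Type*} [AddCommGroup V] [Module ℝ V]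
    (β : V →ₗ[ℝ] V →ₗ[ℝ] ℝ)
    (hβsymm : ∀ v w, β v w = β w v)
    (c : ℝ) (hc : c ≠ 0)
    (Q : Set V) (hQ : Q = {v : V | β v v = c})
    (s : V → V → V) (hs : ∀ x y, s x y = -y + (2 * β x y / β x x) • x) :
    ∀ x ∈ Q, ∀ y ∈ Q,
      (s x y ∈ Q) ∧
      (∀ z : V, s x (s x z) = z) ∧
      (∀ z ∈ Q, s x (s y z) = s (s x y) (s x z)) ∧
      ({w ∈ Q | s x w = w} = {x, -x}) := by
  obtain rfl : s = fun x y ↦ pointReflection β x y := by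
    ext x y
    rw [hs, pointReflection_apply]
  have hβ : IsSymm β := ⟨hβsymm⟩
  rintro x hx y hy
  subst hQ
  simp only [Set.mem_ofPred_eq] at hx hy ⊢
  subst hx
  refine ⟨?_, pointReflection_pointReflection hc,
    fun z _ ↦ pointReflection_pointReflection_eq hβ hc y z,
    setOf_fixed_pointReflection hc⟩
  rw [apply_pointReflection_pointReflection hβ hc, hy]

theorem quadric_is_symmetric_space
    {V : Type*} [AddCommGroup V] [Module ℝ V] [FiniteDimensional ℝ V]
    (β : V →ₗ[ℝ] V →ₗ[ℝ] ℝ)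
    (hβsymm : ∀ v w, β v w = β w v)
    (hβnondeg : ∀ v, (∀ w, β v w = 0) → v = 0)
    (c : ℝ) (hc : c ≠ 0)
    (Q : Set V) (hQ : Q = {v : V | β v v = c})
    (s : V → V → V) (hs : ∀ x y, s x y = -y + (2 * β x y / β x x) • x) :
    ∀ x ∈ Q, ∀ y ∈ Q,
      (s x y ∈ Q) ∧
      (∀ z : V, s x (s x z) = z) ∧
      (∀ z ∈ Q, s x (s y z) = s (s x y) (s x z)) ∧
      ({w ∈ Q | s x w = w} = {x, -x}) :=
  quadric_is_symmetric_space_general β hβsymm c hc Q hQ s hs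
end

section
/- Let 𝔤 be a finite-dimensional real Lie algebra, τ an involutive Lie algebra automorphism of 𝔤 with (−1)-eigenspace 𝔮 = {x ∈ 𝔤 : τ(x) = −x}, and h ∈ 𝔤 with τ(h) = h and (ad h)³ = ad h (an Euler element: ad h is diagonalizable with eigenvalues in {−1,0,1}). Let C ⊆ 𝔮 be a closed convex cone with e^{t·ad h}(C) = C for all t ∈ ℝ, and set C₊ = C ∩ ker(ad h − 1) and C₋ = (−C) ∩ ker(ad h + 1). Then: (i) the spectral projection p₊ = ½((ad h)² + ad h) onto ker(ad h − 1) satisfies p₊(C) = C₊; (ii) the spectral projection p₋ = ½((ad h)² − ad h) onto ker(ad h + 1) satisfies p₋(C) = −C₋; (iii) the spectral projection (ad h)² onto ker((ad h)² − 1) satisfies (ad h)²(C) = C₊ − C₋ = (C ∩ ker(ad h − 1)) + (C ∩ ker(ad h + 1)); (iv) if C is pointed (C ∩ (−C) = {0}) then C₊ and C₋ are pointed; (v) if C is generating in 𝔮 (C − C = 𝔮) then C₊ − C₊ = 𝔮 ∩ ker(ad h − 1) and C₋ − C₋ = 𝔮 ∩ ker(ad h + 1). -/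
/-!
Since `(ad h)³ = ad h`, every `x` splits as `x = p₊ x + p₋ x + p₀ x` into eigenvectors of `ad h`
for `1`, `-1` and `0`, so `e^{t ad h} x = e^t p₊ x + e^{-t} p₋ x + p₀ x`. The rescaled points
`e^{-t} e^{t ad h} x` of the closed cone `C` tend to `p₊ x` as `t → ∞`, hence `p₊ C ⊆ C`, and
likewise `p₋ C ⊆ C` (replace `h` by `-h`). Everything else is linear algebra: an idempotent map
preserving `C` maps it onto `C ∩ {fixed points}`, and `(ad h)² = p₊ + p₋`.
-/

open scoped Pointwise
open Set Topology

theorem Set.image_eq_inter_setOf_apply_eq_self {M : Type*} {p : M → M} {C : Set M}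
    (hp : ∀ x, p (p x) = p x) (hC : MapsTo p C C) : p '' C = C ∩ {x | p x = x} := by
  ext x
  constructor
  · rintro ⟨y, hy, rfl⟩
    exact ⟨hC hy, hp y⟩
  · rintro ⟨hx, hpx⟩
    exact ⟨x, hx, hpx⟩

section AddMonoidHomClass

variable {M F : Type*} [AddCommGroup M] [FunLike F M M] [AddMonoidHomClass F M M]
  {p : F} {C : Set M}

theorem Set.inter_setOf_apply_eq_self_sub_self (hp : ∀ x, p (p x) = p x) (hC : MapsTo p C C) :
    (C ∩ {x | p x = x}) - (C ∩ {x | p x = x}) = (C - C) ∩ {x | p x = x} := by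
  ext w
  simp only [mem_inter_iff, Set.mem_sub, mem_ofPred_eq]
  constructor
  · rintro ⟨a, ⟨ha, hpa⟩, b, ⟨hb, hpb⟩, rfl⟩
    exact ⟨⟨a, ha, b, hb, rfl⟩, by rw [map_sub, hpa, hpb]⟩
  · rintro ⟨⟨a, ha, b, hb, rfl⟩, hw⟩
    exact ⟨p a, ⟨hC ha, hp a⟩, p b, ⟨hC hb, hp b⟩, by rw [← map_sub, hw]⟩

theorem Set.MapsTo.neg_self (hC : MapsTo p C C) : MapsTo p (-C) (-C) := fun x hx => by
  simpa only [mem_neg, map_neg] using hC hx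

end AddMonoidHomClass

theorem Set.inter_neg_eq_zero_of_subset {M : Type*} [AddGroup M] {C S : Set M}
    (hC : C ∩ -C = {0}) (hS : S ⊆ C) (h0 : (0 : M) ∈ S) : S ∩ -S = {0} := by
  refine Subset.antisymm ?_ (singleton_subset_iff.mpr ⟨h0, by simpa using h0⟩)
  rw [← hC]
  exact inter_subset_inter hS (neg_subset_neg.mpr hS)

namespace LinearMap

variable {M : Type*} [AddCommGroup M] [Module ℝ M] (f : M →ₗ[ℝ] M)

/-- The paper's `p₊`; when `f ^ 3 = f` it projects onto the eigenspace of `f` for `1`. -/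
noncomputable def eulerProjPos : M →ₗ[ℝ] M := (1 / 2 : ℝ) • (f ∘ₗ f + f)

/-- The paper's `p₋`; when `f ^ 3 = f` it projects onto the eigenspace of `f` for `-1`. -/
noncomputable def eulerProjNeg : M →ₗ[ℝ] M := (1 / 2 : ℝ) • (f ∘ₗ f - f)

theorem eulerProjPos_apply (x : M) : f.eulerProjPos x = (1 / 2 : ℝ) • (f (f x) + f x) := rfl

theorem eulerProjNeg_apply (x : M) : f.eulerProjNeg x = (1 / 2 : ℝ) • (f (f x) - f x) := rfl

theorem eulerProjPos_neg : (-f).eulerProjPos = f.eulerProjNeg := by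
  ext x
  simp only [eulerProjPos_apply, eulerProjNeg_apply, neg_apply, map_neg, neg_neg, sub_eq_add_neg]

variable {f} {C : Set M}

theorem neg_inter_setOf_apply_eq_neg (S : Set M) :
    -(S ∩ {x | f x = -x}) = -S ∩ {x | f x = -x} := by
  ext x
  simp only [inter_neg, mem_inter_iff, mem_neg, mem_ofPred_eq, map_neg, neg_inj]

variable (hf : ∀ y, f (f (f y)) = f y)
include hf

theorem apply_eulerProjPos (x : M) : f (f.eulerProjPos x) = f.eulerProjPos x := by
  rw [eulerProjPos_apply, map_smul, map_add, hf, add_comm]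

theorem apply_eulerProjNeg (x : M) : f (f.eulerProjNeg x) = -f.eulerProjNeg x := by
  rw [eulerProjNeg_apply, map_smul, map_sub, hf, ← smul_neg, neg_sub]

theorem eulerProjPos_apply_eq_self_iff {x : M} : f.eulerProjPos x = x ↔ f x = x := by
  refine ⟨fun hx => hx ▸ apply_eulerProjPos hf x, fun hx => ?_⟩
  rw [eulerProjPos_apply, hx, hx]
  module

theorem eulerProjNeg_apply_eq_self_iff {x : M} : f.eulerProjNeg x = x ↔ f x = -x := by
  refine ⟨fun hx => hx ▸ apply_eulerProjNeg hf x, fun hx => ?_⟩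
  rw [eulerProjNeg_apply, hx, map_neg, hx]
  module

theorem eulerProjPos_idem (x : M) : f.eulerProjPos (f.eulerProjPos x) = f.eulerProjPos x :=
  (eulerProjPos_apply_eq_self_iff hf).2 (apply_eulerProjPos hf x)

theorem eulerProjNeg_idem (x : M) : f.eulerProjNeg (f.eulerProjNeg x) = f.eulerProjNeg x :=
  (eulerProjNeg_apply_eq_self_iff hf).2 (apply_eulerProjNeg hf x)

theorem setOf_eulerProjPos_apply_eq_self : {x | f.eulerProjPos x = x} = {x | f x = x} :=
  Set.ext fun _ => eulerProjPos_apply_eq_self_iff hf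

theorem setOf_eulerProjNeg_apply_eq_self : {x | f.eulerProjNeg x = x} = {x | f x = -x} :=
  Set.ext fun _ => eulerProjNeg_apply_eq_self_iff hf

theorem image_eulerProjPos (hC : MapsTo f.eulerProjPos C C) :
    f.eulerProjPos '' C = C ∩ {x | f x = x} := by
  rw [image_eq_inter_setOf_apply_eq_self (eulerProjPos_idem hf) hC,
    setOf_eulerProjPos_apply_eq_self hf]

theorem image_eulerProjNeg (hC : MapsTo f.eulerProjNeg C C) :
    f.eulerProjNeg '' C = C ∩ {x | f x = -x} := by
  rw [image_eq_inter_setOf_apply_eq_self (eulerProjNeg_idem hf) hC,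
    setOf_eulerProjNeg_apply_eq_self hf]

theorem image_apply_apply (hCpos : MapsTo f.eulerProjPos C C) (hCneg : MapsTo f.eulerProjNeg C C)
    (hCadd : ∀ x ∈ C, ∀ y ∈ C, x + y ∈ C) :
    (fun y => f (f y)) '' C = (C ∩ {x | f x = x}) + (C ∩ {x | f x = -x}) := by
  ext w
  constructor
  · rintro ⟨y, hy, rfl⟩
    refine ⟨f.eulerProjPos y, ⟨hCpos hy, apply_eulerProjPos hf y⟩,
      f.eulerProjNeg y, ⟨hCneg hy, apply_eulerProjNeg hf y⟩, ?_⟩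
    simp only [eulerProjPos_apply, eulerProjNeg_apply]
    module
  · rintro ⟨a, ⟨ha, hfa : f a = a⟩, b, ⟨hb, hfb : f b = -b⟩, rfl⟩
    refine ⟨a + b, hCadd a ha b hb, ?_⟩
    simp only [map_add, map_neg, hfa, hfb, neg_neg]

end LinearMap

section Exponential

open NormedSpace

variable {E : Type*} [NormedAddCommGroup E] [NormedSpace ℝ E] [CompleteSpace E]

theorem NormedSpace.exp_apply_of_apply_eq_smul {A : E →L[ℝ] E} {c : ℝ} {v : E}
    (hv : A v = c • v) : exp A v = Real.exp c • v := by
  have hpow : ∀ n : ℕ, (A ^ n) v = c ^ n • v := by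
    intro n
    induction n with
    | zero => simp
    | succ n ih => rw [pow_succ', mul_apply_eq_comp, ih, map_smul, hv, smul_smul, ← pow_succ]
  have hA : HasSum (fun n : ℕ => ((n.factorial : ℝ)⁻¹ • A ^ n) v) (exp A v) :=
    (exp_series_hasSum_exp' (𝕂 := ℝ) A).mapL (ContinuousLinearMap.apply ℝ E v)
  have hc : HasSum (fun n : ℕ => ((n.factorial : ℝ)⁻¹ • c ^ n) • v) (Real.exp c • v) :=
    (Real.exp_eq_exp_ℝ ▸ exp_series_hasSum_exp' (𝕂 := ℝ) c).smul_const v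
  refine hA.unique (hc.congr_fun fun n => ?_)
  rw [smul_apply, hpow, smul_smul, smul_eq_mul]

variable {A : E →L[ℝ] E} (hA : ∀ y, A (A (A y)) = A y)
include hA

theorem exp_smul_apply_eq_of_cube (t : ℝ) (x : E) :
    exp (t • A) x = Real.exp t • (A : E →ₗ[ℝ] E).eulerProjPos x
      + Real.exp (-t) • (A : E →ₗ[ℝ] E).eulerProjNeg x + (x - A (A x)) := by
  have hx : x = (A : E →ₗ[ℝ] E).eulerProjPos x + (A : E →ₗ[ℝ] E).eulerProjNeg x
      + (x - A (A x)) := by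
    simp only [LinearMap.eulerProjPos_apply, LinearMap.eulerProjNeg_apply,
      ContinuousLinearMap.coe_coe]
    module
  have hpos : (t • A) ((A : E →ₗ[ℝ] E).eulerProjPos x)
      = t • (A : E →ₗ[ℝ] E).eulerProjPos x := by
    rw [smul_apply]
    exact congrArg (t • ·) (LinearMap.apply_eulerProjPos hA x)
  have hneg : (t • A) ((A : E →ₗ[ℝ] E).eulerProjNeg x)
      = (-t) • (A : E →ₗ[ℝ] E).eulerProjNeg x := by
    rw [smul_apply, neg_smul, ← smul_neg]
    exact congrArg (t • ·) (LinearMap.apply_eulerProjNeg hA x)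
  have hzero : (t • A) (x - A (A x)) = (0 : ℝ) • (x - A (A x)) := by
    rw [smul_apply, map_sub, hA, sub_self, smul_zero, zero_smul]
  conv_lhs => rw [hx]
  rw [map_add, map_add, exp_apply_of_apply_eq_smul hpos, exp_apply_of_apply_eq_smul hneg,
    exp_apply_of_apply_eq_smul hzero, Real.exp_zero, one_smul]

variable {C : Set E} (hCclosed : IsClosed C) (hCsmul : ∀ r : ℝ, 0 ≤ r → ∀ x ∈ C, r • x ∈ C)
  (hexp : ∀ t : ℝ, MapsTo ⇑(exp (t • A)) C C)
include hCclosed hCsmul hexp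

theorem mapsTo_eulerProjPos_of_mapsTo_exp : MapsTo (A : E →ₗ[ℝ] E).eulerProjPos C C := by
  intro x hx
  set q := (A : E →ₗ[ℝ] E).eulerProjPos x
  set r := (A : E →ₗ[ℝ] E).eulerProjNeg x
  set z := x - A (A x)
  have hlim : Filter.Tendsto (fun s : ℝ => q + s • (s • r + z)) (𝓝 0) (𝓝 q) :=
    (by fun_prop : Continuous fun s : ℝ => q + s • (s • r + z)).tendsto' 0 q (by simp)
  have hscaled (t : ℝ) :
      Real.exp (-t) • exp (t • A) x = q + Real.exp (-t) • (Real.exp (-t) • r + z) := by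
    have hinv : Real.exp (-t) * Real.exp t = 1 := by
      rw [← Real.exp_add, neg_add_cancel, Real.exp_zero]
    rw [exp_smul_apply_eq_of_cube hA, smul_add, smul_add, smul_smul, hinv, one_smul, add_assoc,
      ← smul_add]
  have hmem (t : ℝ) : q + Real.exp (-t) • (Real.exp (-t) • r + z) ∈ C :=
    hscaled t ▸ hCsmul _ (Real.exp_pos (-t)).le _ (hexp t hx)
  exact hCclosed.mem_of_tendsto (hlim.comp Real.tendsto_exp_neg_atTop_nhds_zero)
    (Filter.Eventually.of_forall hmem)

theorem mapsTo_eulerProjNeg_of_mapsTo_exp : MapsTo (A : E →ₗ[ℝ] E).eulerProjNeg C C := by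
  have := mapsTo_eulerProjPos_of_mapsTo_exp (A := -A) (fun y => by simp [hA]) hCclosed hCsmul
    fun t => by simpa only [smul_neg, ← neg_smul] using hexp (-t)
  rwa [ContinuousLinearMap.toLinearMap_neg, LinearMap.eulerProjPos_neg] at this

end Exponential
theorem euler_cone_projections_general
    {𝔤 : Type*} [NormedAddCommGroup 𝔤] [NormedSpace ℝ 𝔤] [FiniteDimensional ℝ 𝔤]
    -- Lie algebra structure: an antisymmetric bilinear bracket satisfying Jacobi
    (bracket : 𝔤 →ₗ[ℝ] 𝔤 →ₗ[ℝ] 𝔤)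
    -- τ : involutive Lie algebra automorphism
    (τ : 𝔤 ≃ₗ[ℝ] 𝔤)
    -- h : Euler element fixed by τ
    (h : 𝔤)
    (heuler : ∀ y, bracket h (bracket h (bracket h y)) = bracket h y)
    -- C : closed convex cone contained in 𝔮 = {x : τ x = -x}, invariant under e^{t ad h}
    (C : Set 𝔤)
    (hCclosed : IsClosed C)
    (hCadd : ∀ x ∈ C, ∀ y ∈ C, x + y ∈ C)
    (hCsmul : ∀ r : ℝ, 0 ≤ r → ∀ x ∈ C, r • x ∈ C)
    (hCinv : ∀ t : ℝ,
      ⇑(NormedSpace.exp (t • LinearMap.toContinuousLinearMap (bracket h))) '' C = C) :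
    -- (i) p₊ = ½((ad h)² + ad h) maps C onto C₊ = C ∩ ker(ad h − 1)
    ((fun y => (1 / 2 : ℝ) • (bracket h (bracket h y) + bracket h y)) '' C
        = C ∩ {x | bracket h x = x}) ∧
    -- (ii) p₋ = ½((ad h)² − ad h) maps C onto −C₋, where C₋ = (−C) ∩ ker(ad h + 1)
    ((fun y => (1 / 2 : ℝ) • (bracket h (bracket h y) - bracket h y)) '' C
        = -((-C) ∩ {x | bracket h x = -x})) ∧
    -- (iii) (ad h)² maps C onto C₊ − C₋ = (C ∩ ker(ad h − 1)) + (C ∩ ker(ad h + 1))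
    ((fun y => bracket h (bracket h y)) '' C
        = (C ∩ {x | bracket h x = x}) - ((-C) ∩ {x | bracket h x = -x})) ∧
    ((C ∩ {x | bracket h x = x}) - ((-C) ∩ {x | bracket h x = -x})
        = (C ∩ {x | bracket h x = x}) + (C ∩ {x | bracket h x = -x})) ∧
    -- (iv) pointedness is inherited
    (C ∩ (-C) = {0} →
      (C ∩ {x | bracket h x = x}) ∩ (-(C ∩ {x | bracket h x = x})) = {0} ∧
      ((-C) ∩ {x | bracket h x = -x}) ∩ (-((-C) ∩ {x | bracket h x = -x})) = {0}) ∧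
    -- (v) generation is inherited
    (C - C = {x | τ x = -x} →
      (C ∩ {x | bracket h x = x}) - (C ∩ {x | bracket h x = x})
          = {x | τ x = -x} ∩ {x | bracket h x = x} ∧
      ((-C) ∩ {x | bracket h x = -x}) - ((-C) ∩ {x | bracket h x = -x})
          = {x | τ x = -x} ∩ {x | bracket h x = -x}) := by
  have hexp (t : ℝ) := mapsTo_iff_image_subset.2 (hCinv t).subset
  have hpos : MapsTo (bracket h).eulerProjPos C C := by
    simpa only [LinearMap.coe_toContinuousLinearMap] using
      mapsTo_eulerProjPos_of_mapsTo_exp heuler hCclosed hCsmul hexp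
  have hneg : MapsTo (bracket h).eulerProjNeg C C := by
    simpa only [LinearMap.coe_toContinuousLinearMap] using
      mapsTo_eulerProjNeg_of_mapsTo_exp heuler hCclosed hCsmul hexp
  have hCneg : -((-C) ∩ {x | bracket h x = -x}) = C ∩ {x | bracket h x = -x} := by
    rw [LinearMap.neg_inter_setOf_apply_eq_neg, neg_neg]
  have hsum : (C ∩ {x | bracket h x = x}) - ((-C) ∩ {x | bracket h x = -x})
      = (C ∩ {x | bracket h x = x}) + (C ∩ {x | bracket h x = -x}) := by
    rw [sub_eq_add_neg, hCneg]
  refine ⟨LinearMap.image_eulerProjPos heuler hpos,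
    hCneg ▸ LinearMap.image_eulerProjNeg heuler hneg,
    hsum ▸ LinearMap.image_apply_apply heuler hpos hneg hCadd, hsum, fun hpt => ⟨?_, ?_⟩,
    fun hgen => ⟨?_, ?_⟩⟩
  · have h0 : (0 : 𝔤) ∈ C := (hpt.symm ▸ mem_singleton 0 : (0 : 𝔤) ∈ C ∩ -C).1
    exact inter_neg_eq_zero_of_subset hpt inter_subset_left ⟨h0, by simp⟩
  · have h0 : (0 : 𝔤) ∈ -C := (hpt.symm ▸ mem_singleton 0 : (0 : 𝔤) ∈ C ∩ -C).2
    refine inter_neg_eq_zero_of_subset ?_ inter_subset_left ⟨h0, by simp⟩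
    rwa [neg_neg, inter_comm]
  · rw [← hgen, ← LinearMap.setOf_eulerProjPos_apply_eq_self heuler]
    exact inter_setOf_apply_eq_self_sub_self (LinearMap.eulerProjPos_idem heuler) hpos
  · rw [← hgen, ← neg_sub_neg C C, ← LinearMap.setOf_eulerProjNeg_apply_eq_self heuler]
    exact inter_setOf_apply_eq_self_sub_self (LinearMap.eulerProjNeg_idem heuler) hneg.neg_self

theorem euler_cone_projections
    {𝔤 : Type*} [NormedAddCommGroup 𝔤] [NormedSpace ℝ 𝔤] [FiniteDimensional ℝ 𝔤]
    -- Lie algebra structure: an antisymmetric bilinear bracket satisfying Jacobi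
    (bracket : 𝔤 →ₗ[ℝ] 𝔤 →ₗ[ℝ] 𝔤)
    (halt : ∀ x, bracket x x = 0)
    (hjac : ∀ x y z, bracket x (bracket y z)
      = bracket (bracket x y) z + bracket y (bracket x z))
    -- τ : involutive Lie algebra automorphism
    (τ : 𝔤 ≃ₗ[ℝ] 𝔤) (hτinv : ∀ x, τ (τ x) = x)
    (hτbr : ∀ x y, τ (bracket x y) = bracket (τ x) (τ y))
    -- h : Euler element fixed by τ
    (h : 𝔤) (hτh : τ h = h)
    (heuler : ∀ y, bracket h (bracket h (bracket h y)) = bracket h y)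
    -- C : closed convex cone contained in 𝔮 = {x : τ x = -x}, invariant under e^{t ad h}
    (C : Set 𝔤)
    (hCsub : ∀ x ∈ C, τ x = -x)
    (hCclosed : IsClosed C)
    (hCadd : ∀ x ∈ C, ∀ y ∈ C, x + y ∈ C)
    (hCsmul : ∀ r : ℝ, 0 ≤ r → ∀ x ∈ C, r • x ∈ C)
    (hCinv : ∀ t : ℝ,
      ⇑(NormedSpace.exp (t • LinearMap.toContinuousLinearMap (bracket h))) '' C = C) :
    -- (i) p₊ = ½((ad h)² + ad h) maps C onto C₊ = C ∩ ker(ad h − 1)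
    ((fun y => (1 / 2 : ℝ) • (bracket h (bracket h y) + bracket h y)) '' C
        = C ∩ {x | bracket h x = x}) ∧
    -- (ii) p₋ = ½((ad h)² − ad h) maps C onto −C₋, where C₋ = (−C) ∩ ker(ad h + 1)
    ((fun y => (1 / 2 : ℝ) • (bracket h (bracket h y) - bracket h y)) '' C
        = -((-C) ∩ {x | bracket h x = -x})) ∧
    -- (iii) (ad h)² maps C onto C₊ − C₋ = (C ∩ ker(ad h − 1)) + (C ∩ ker(ad h + 1))
    ((fun y => bracket h (bracket h y)) '' C
        = (C ∩ {x | bracket h x = x}) - ((-C) ∩ {x | bracket h x = -x})) ∧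
    ((C ∩ {x | bracket h x = x}) - ((-C) ∩ {x | bracket h x = -x})
        = (C ∩ {x | bracket h x = x}) + (C ∩ {x | bracket h x = -x})) ∧
    -- (iv) pointedness is inherited
    (C ∩ (-C) = {0} →
      (C ∩ {x | bracket h x = x}) ∩ (-(C ∩ {x | bracket h x = x})) = {0} ∧
      ((-C) ∩ {x | bracket h x = -x}) ∩ (-((-C) ∩ {x | bracket h x = -x})) = {0}) ∧
    -- (v) generation is inherited
    (C - C = {x | τ x = -x} →
      (C ∩ {x | bracket h x = x}) - (C ∩ {x | bracket h x = x})
          = {x | τ x = -x} ∩ {x | bracket h x = x} ∧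
      ((-C) ∩ {x | bracket h x = -x}) - ((-C) ∩ {x | bracket h x = -x})
          = {x | τ x = -x} ∩ {x | bracket h x = -x}) :=
  euler_cone_projections_general bracket τ h heuler C hCclosed hCadd hCsmul hCinv
end

section
/- Let 𝔤 be a finite-dimensional real Lie algebra, τ an involutive Lie algebra automorphism of 𝔤, 𝔥 = ker(τ − id), 𝔮 = ker(τ + id), and x ∈ 𝔮. Set σ_x = exp(−2·ad x) and ζ_x = exp(−ad x) (exponentials of endomorphisms of 𝔤). Then: (i) τ ∘ σ_x ∘ τ = σ_x⁻¹, so on the subspace ker(σ_x² − id) the maps τ and σ_x commute; (ii) the eigenspaces 𝔤^{σ_x} = ker(σ_x − id) and 𝔤^{−σ_x} = ker(σ_x + id) are invariant under τ and under ζ_x; (iii) on 𝔤^{σ_x} the maps ζ_x and τ commute, while on 𝔤^{−σ_x} one has τ ∘ ζ_x = −ζ_x ∘ τ and ζ_x ∘ ζ_x = −id (so ζ_x is a complex structure on 𝔤^{−σ_x}); (iv) consequently ζ_x(𝔥 ∩ 𝔤^{σ_x}) = 𝔥 ∩ 𝔤^{σ_x}, ζ_x(𝔮 ∩ 𝔤^{σ_x})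 = 𝔮 ∩ 𝔤^{σ_x}, ζ_x(𝔥 ∩ 𝔤^{−σ_x}) = 𝔮 ∩ 𝔤^{−σ_x}, and ζ_x(𝔮 ∩ 𝔤^{−σ_x}) = 𝔥 ∩ 𝔤^{−σ_x}. -/
/-!
Since `τ` is an automorphism with `τ x = -x`, it conjugates `ad x` to `ad (τ x) = -ad x`, hence
conjugates `ζ_x = exp (-ad x)` to its inverse `exp (ad x)`, and `σ_x = ζ_x²`. Everything else is
about an involution `τ` reversing an invertible map `ζ`: on the `ε`-eigenspace of `ζ²`
(`ε = ±1`) one has `ζ⁻¹ = ε ζ`, so `τ ζ = ζ⁻¹ τ = ε ζ τ`, and `ζ` maps the `δ`-eigenspace of `τ`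
in it bijectively onto the `εδ`-eigenspace.
-/

open NormedSpace

/-- `τ` is a reversing symmetry of `f`, whose inverse is `g`. -/
structure IsReversor {M : Type*} [AddCommGroup M] (τ f g : M →+ M) : Prop where
  involutive : ∀ y, τ (τ y) = y
  left_inv : ∀ y, g (f y) = y
  right_inv : ∀ y, f (g y) = y
  conj : ∀ y, τ (f y) = g (τ y)

namespace IsReversor

variable {M : Type*} [AddCommGroup M] {τ f g : M →+ M}

theorem symm (h : IsReversor τ f g) : IsReversor τ g f where
  involutive := h.involutive
  left_inv := h.right_inv
  right_inv := h.left_inv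
  conj y := by rw [← h.involutive (f (τ y)), h.conj, h.involutive]

theorem comp_self (h : IsReversor τ f g) : IsReversor τ (f.comp f) (g.comp g) where
  involutive := h.involutive
  left_inv y := by simp [h.left_inv]
  right_inv y := by simp [h.right_inv]
  conj y := by simp [h.conj]

theorem conj_eq_inv (h : IsReversor τ f g) (y : M) : τ (f (τ y)) = g y := by
  rw [h.conj, h.involutive]

-- The signs `ε δ : ℤˣ` treat the `+1` and `-1` eigenspaces uniformly.

theorem inv_eq_smul_of_sq_eq_smul (h : IsReversor τ f g) (ε : ℤˣ) {y : M}
    (hy : f (f y) = ε • y) : g y = ε • f y := by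
  have hfy : f y = ε • g y := by simpa only [h.left_inv, map_zsmul_unit] using congrArg g hy
  rw [hfy, smul_smul, Int.units_mul_self, one_smul]

theorem apply_rev_of_apply_eq_smul (h : IsReversor τ f g) (ε : ℤˣ) {y : M}
    (hy : f y = ε • y) : f (τ y) = ε • τ y := by
  have hgτ : g (τ y) = ε • τ y := by rw [← h.conj, hy, map_zsmul_unit]
  calc f (τ y) = ε • ε • f (τ y) := by rw [smul_smul, Int.units_mul_self, one_smul]
    _ = ε • f (g (τ y)) := by rw [hgτ, map_zsmul_unit]
    _ = ε • τ y := by rw [h.right_inv]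

theorem rev_apply_of_sq_eq_smul (h : IsReversor τ f g) (ε : ℤˣ) {y : M}
    (hy : f (f y) = ε • y) : τ (f y) = ε • f (τ y) :=
  h.conj y ▸ h.inv_eq_smul_of_sq_eq_smul ε (h.comp_self.apply_rev_of_apply_eq_smul ε hy)

theorem image_inter_eigenspaces (h : IsReversor τ f g) (δ ε : ℤˣ) :
    f '' ({y | τ y = δ • y} ∩ {y | f (f y) = ε • y})
      = {y | τ y = (ε * δ) • y} ∩ {y | f (f y) = ε • y} := by
  refine (Set.InvOn.bijOn ⟨fun y _ ↦ h.left_inv y, fun y _ ↦ h.right_inv y⟩ ?_ ?_).image_eq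
  · rintro y ⟨hτy : τ y = δ • y, hy : f (f y) = ε • y⟩
    refine ⟨?_, ?_⟩
    · change τ (f y) = (ε * δ) • f y
      rw [h.rev_apply_of_sq_eq_smul ε hy, hτy, map_zsmul_unit, smul_smul]
    · change f (f (f y)) = ε • f y
      rw [hy, map_zsmul_unit]
  · rintro z ⟨hτz : τ z = (ε * δ) • z, hz : f (f z) = ε • z⟩
    have hgz := h.inv_eq_smul_of_sq_eq_smul ε hz
    refine ⟨?_, ?_⟩
    · change τ (g z) = δ • g z
      rw [h.symm.conj, hτz, map_zsmul_unit, hgz, smul_smul, mul_comm]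
    · change f (f (g z)) = ε • g z
      rw [h.right_inv, hgz, smul_smul, Int.units_mul_self, one_smul]

end IsReversor

section Exp

variable {𝕜 E : Type*} [RCLike 𝕜] [NormedAddCommGroup E] [NormedSpace 𝕜 E] [CompleteSpace E]

theorem exp_add_smul (A : E →L[𝕜] E) (s t : 𝕜) :
    exp ((s + t) • A) = exp (s • A) * exp (t • A) := by
  let _ := NormedAlgebra.restrictScalars ℚ 𝕜 (E →L[𝕜] E)
  rw [add_smul, exp_add_of_commute ((Commute.refl A).smul_left s |>.smul_right t)]

theorem isReversor_exp_smul {T A : E →L[𝕜] E} (hT : T * T = 1) (hTA : SemiconjBy T A (-A))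
    (t : 𝕜) : IsReversor (T : E →+ E) (exp (t • A) : E →L[𝕜] E) (exp ((-t) • A) : E →L[𝕜] E) := by
  let _ := NormedAlgebra.restrictScalars ℚ 𝕜 (E →L[𝕜] E)
  have hinv (s : 𝕜) : exp ((-s) • A) * exp (s • A) = 1 := by
    rw [← exp_add_smul, neg_add_cancel, zero_smul, exp_zero]
  have hTtA : SemiconjBy T (t • A) ((-t) • A) := by
    rw [neg_smul, ← smul_neg]
    exact hTA.smul_right t
  exact
    { involutive := fun y ↦ congrArg (· y) hT
      left_inv := fun y ↦ congrArg (· y) (hinv t)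
      right_inv := fun y ↦ by simpa using congrArg (· y) (hinv (-t))
      conj := fun y ↦ congrArg (· y) hTtA.exp_right }

end Exp

theorem tau_sigma_zeta_relations_general
    {𝔤 : Type*} [NormedAddCommGroup 𝔤] [NormedSpace ℝ 𝔤] [FiniteDimensional ℝ 𝔤]
    -- Lie algebra structure
    (bracket : 𝔤 →ₗ[ℝ] 𝔤 →ₗ[ℝ] 𝔤)
    -- τ : involutive Lie algebra automorphism
    (τ : 𝔤 ≃ₗ[ℝ] 𝔤) (hτinv : ∀ x, τ (τ x) = x)
    (hτbr : ∀ x y, τ (bracket x y) = bracket (τ x) (τ y))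
    -- x ∈ 𝔮
    (x : 𝔤) (hx : τ x = -x)
    (σx ζx : 𝔤 →L[ℝ] 𝔤)
    (hσx : σx = NormedSpace.exp ((-2 : ℝ) • LinearMap.toContinuousLinearMap (bracket x)))
    (hζx : ζx = NormedSpace.exp ((-1 : ℝ) • LinearMap.toContinuousLinearMap (bracket x))) :
    -- (i) τ ∘ σ_x ∘ τ = σ_x⁻¹, hence τ and σ_x commute on ker(σ_x² − id)
    (∀ y, τ (σx (τ y))
        = NormedSpace.exp ((2 : ℝ) • LinearMap.toContinuousLinearMap (bracket x)) y) ∧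
    (∀ y, σx (σx y) = y → τ (σx y) = σx (τ y)) ∧
    -- (ii) the eigenspaces 𝔤^{±σ_x} are invariant under τ and ζ_x
    (∀ y, σx y = y → σx (τ y) = τ y ∧ σx (ζx y) = ζx y) ∧
    (∀ y, σx y = -y → σx (τ y) = -(τ y) ∧ σx (ζx y) = -(ζx y)) ∧
    -- (iii) ζ_x and τ commute on 𝔤^{σ_x}; on 𝔤^{−σ_x}, τ∘ζ_x = −ζ_x∘τ and ζ_x² = −id
    (∀ y, σx y = y → ζx (τ y) = τ (ζx y)) ∧
    (∀ y, σx y = -y → τ (ζx y) = -(ζx (τ y)) ∧ ζx (ζx y) = -y) ∧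
    -- (iv) the induced bijections between the intersections with 𝔥 and 𝔮
    (⇑ζx '' ({y | τ y = y} ∩ {y | σx y = y}) = {y | τ y = y} ∩ {y | σx y = y}) ∧
    (⇑ζx '' ({y | τ y = -y} ∩ {y | σx y = y}) = {y | τ y = -y} ∩ {y | σx y = y}) ∧
    (⇑ζx '' ({y | τ y = y} ∩ {y | σx y = -y}) = {y | τ y = -y} ∩ {y | σx y = -y}) ∧
    (⇑ζx '' ({y | τ y = -y} ∩ {y | σx y = -y}) = {y | τ y = y} ∩ {y | σx y = -y}) := by
  set A := LinearMap.toContinuousLinearMap (bracket x)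
  set T := LinearMap.toContinuousLinearMap (τ : 𝔤 →ₗ[ℝ] 𝔤)
  have hT : T * T = 1 := ContinuousLinearMap.ext hτinv
  have hTA : SemiconjBy T A (-A) := ContinuousLinearMap.ext fun y ↦ by simp [T, A, hτbr, hx]
  have h : IsReversor (τ : 𝔤 →+ 𝔤) ζx (exp ((1 : ℝ) • A) : 𝔤 →L[ℝ] 𝔤) := by
    have hTζ := isReversor_exp_smul hT hTA (-1)
    rwa [neg_neg, ← hζx] at hTζ
  have hσ : σx = ζx * ζx := by rw [hσx, hζx, ← exp_add_smul]; norm_num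
  have hexp2 : exp ((2 : ℝ) • A) = exp ((1 : ℝ) • A) * exp ((1 : ℝ) • A) := by
    rw [← exp_add_smul]; norm_num
  rw [hexp2, hσ]
  simp only [mul_apply_eq_comp]
  refine ⟨?_, ?_, ?_, ?_, ?_, ?_, ?_, ?_, ?_, ?_⟩
  · exact h.comp_self.conj_eq_inv
  · intro y hy; simpa using h.comp_self.rev_apply_of_sq_eq_smul 1 (by simpa using hy)
  · intro y hy; simpa [hy] using h.comp_self.apply_rev_of_apply_eq_smul 1 (by simpa using hy)
  · intro y hy; simpa [hy] using h.comp_self.apply_rev_of_apply_eq_smul (-1) (by simpa using hy)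
  · intro y hy; simpa using (h.rev_apply_of_sq_eq_smul 1 (by simpa using hy)).symm
  · intro y hy; simpa [hy] using h.rev_apply_of_sq_eq_smul (-1) (by simpa using hy)
  · simpa using h.image_inter_eigenspaces 1 1
  · simpa using h.image_inter_eigenspaces (-1) 1
  · simpa using h.image_inter_eigenspaces 1 (-1)
  · simpa using h.image_inter_eigenspaces (-1) (-1)

theorem tau_sigma_zeta_relations
    {𝔤 : Type*} [NormedAddCommGroup 𝔤] [NormedSpace ℝ 𝔤] [FiniteDimensional ℝ 𝔤]
    -- Lie algebra structure
    (bracket : 𝔤 →ₗ[ℝ] 𝔤 →ₗ[ℝ] 𝔤)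
    (halt : ∀ x, bracket x x = 0)
    (hjac : ∀ x y z, bracket x (bracket y z)
      = bracket (bracket x y) z + bracket y (bracket x z))
    -- τ : involutive Lie algebra automorphism
    (τ : 𝔤 ≃ₗ[ℝ] 𝔤) (hτinv : ∀ x, τ (τ x) = x)
    (hτbr : ∀ x y, τ (bracket x y) = bracket (τ x) (τ y))
    -- x ∈ 𝔮
    (x : 𝔤) (hx : τ x = -x)
    (σx ζx : 𝔤 →L[ℝ] 𝔤)
    (hσx : σx = NormedSpace.exp ((-2 : ℝ) • LinearMap.toContinuousLinearMap (bracket x)))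
    (hζx : ζx = NormedSpace.exp ((-1 : ℝ) • LinearMap.toContinuousLinearMap (bracket x))) :
    -- (i) τ ∘ σ_x ∘ τ = σ_x⁻¹, hence τ and σ_x commute on ker(σ_x² − id)
    (∀ y, τ (σx (τ y))
        = NormedSpace.exp ((2 : ℝ) • LinearMap.toContinuousLinearMap (bracket x)) y) ∧
    (∀ y, σx (σx y) = y → τ (σx y) = σx (τ y)) ∧
    -- (ii) the eigenspaces 𝔤^{±σ_x} are invariant under τ and ζ_x
    (∀ y, σx y = y → σx (τ y) = τ y ∧ σx (ζx y) = ζx y) ∧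
    (∀ y, σx y = -y → σx (τ y) = -(τ y) ∧ σx (ζx y) = -(ζx y)) ∧
    -- (iii) ζ_x and τ commute on 𝔤^{σ_x}; on 𝔤^{−σ_x}, τ∘ζ_x = −ζ_x∘τ and ζ_x² = −id
    (∀ y, σx y = y → ζx (τ y) = τ (ζx y)) ∧
    (∀ y, σx y = -y → τ (ζx y) = -(ζx (τ y)) ∧ ζx (ζx y) = -y) ∧
    -- (iv) the induced bijections between the intersections with 𝔥 and 𝔮
    (⇑ζx '' ({y | τ y = y} ∩ {y | σx y = y}) = {y | τ y = y} ∩ {y | σx y = y}) ∧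
    (⇑ζx '' ({y | τ y = -y} ∩ {y | σx y = y}) = {y | τ y = -y} ∩ {y | σx y = y}) ∧
    (⇑ζx '' ({y | τ y = y} ∩ {y | σx y = -y}) = {y | τ y = -y} ∩ {y | σx y = -y}) ∧
    (⇑ζx '' ({y | τ y = -y} ∩ {y | σx y = -y}) = {y | τ y = y} ∩ {y | σx y = -y}) :=
  tau_sigma_zeta_relations_general bracket τ hτinv hτbr x hx σx ζx hσx hζx
end

section
/- Let V be a finite-dimensional real vector space and A a linear endomorphism of V. Then ker(cosh A) = ker(exp(−2A) + id_V) = ∑_{n=0}^∞ ker(A² + (n + 1/2)²π²·id_V), where cosh A = ½(exp(A) + exp(−A)), exp denotes the exponential of endomorphisms, and the right-hand side is the sum (supremum as subspaces) over all integers n ≥ 0 of the kernels of A² + (n + 1/2)²π²·id_V. -/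
/-!
Since `exp (-A)` is invertible, `cosh A x = 0` iff `exp (-2A) x = -x`, and (replacing `A` by `-A`)
iff `exp (2A) x = -x`. Let `W` be the space of such `x`; it is stable under polynomials in `A`.
The orbits `t ↦ exp (tA) y` are computed by solving `γ' = Aγ` explicitly: on an eigenvector,
`exp (2A)` acts by `e^{2a} > 0`; on `ker (A² - 2αA + α² + β²)` by
`e^{2α} (cos 2β + sin 2β (A - α) / β)`, which is `-1` only for `α = 0`, `β = (n + 1/2) π`; and on
`ker (A² + ω²)²` with `ω = (n + 1/2) π` the secular terms give `exp (2A) = -1 + A (A² + ω²) / ω²`.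
So every irreducible factor of the minimal polynomial that is seen by `W` is `X² + ω²`, and it is
seen only to the first power: `W` is the sum of the `ker (A² + (n + 1/2)² π²)`.
-/

open NormedSpace Polynomial Real

section PrimaryDecomposition

variable {K M : Type*} [Field K] [AddCommGroup M] [Module K M] {f g : Module.End K M}

theorem aeval_apply_eq_zero_of_dvd {p q : K[X]} (hpq : p ∣ q) {v : M} (hv : aeval f p v = 0) :
    aeval f q v = 0 := by
  obtain ⟨r, rfl⟩ := hpq
  rw [mul_comm, aeval_mul, Module.End.mul_apply, hv, map_zero]

theorem aeval_apply_mem_ker_of_commute (hfg : Commute f g) (p : K[X]) {v : M}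
    (hv : v ∈ LinearMap.ker g) : aeval f p v ∈ LinearMap.ker g := by
  have hcomm : Commute g (aeval f p) :=
    Algebra.commute_of_mem_adjoin_singleton_of_commute (aeval_mem_adjoin_singleton K f) hfg.symm
  rw [LinearMap.mem_ker] at hv ⊢
  rw [← Module.End.mul_apply, hcomm.eq, Module.End.mul_apply, hv, map_zero]

/-- Primary decomposition inside `ker g`, in the case where every primary component is
semisimple. -/
theorem ker_aeval_inf_ker_le (hfg : Commute f g) {T : Submodule K M}
    (hker : ∀ i : K[X], Irreducible i → LinearMap.ker (aeval f i) ⊓ LinearMap.ker g ≤ T)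
    (hsq : ∀ i : K[X], Irreducible i →
      LinearMap.ker (aeval f (i ^ 2)) ⊓ LinearMap.ker g ≤ LinearMap.ker (aeval f i))
    {r : K[X]} (hr : r ≠ 0) : LinearMap.ker (aeval f r) ⊓ LinearMap.ker g ≤ T := by
  induction r using WfDvdMonoid.induction_on_irreducible with
  | zero => exact absurd rfl hr
  | unit u hu =>
    rintro v ⟨hv, -⟩
    have hinj := (Module.End.isUnit_iff _).mp (hu.map (aeval f)) |>.injective
    rw [hinj (hv.trans (map_zero _).symm)]
    exact T.zero_mem
  | mul a i ha hi ih =>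
    rintro v ⟨hia, hg⟩
    rw [SetLike.mem_coe, LinearMap.mem_ker] at hia hg
    by_cases hdvd : i ∣ a
    · obtain ⟨b, rfl⟩ := hdvd
      have hw : aeval f b v ∈ LinearMap.ker (aeval f (i ^ 2)) ⊓ LinearMap.ker g := by
        refine ⟨?_, aeval_apply_mem_ker_of_commute hfg b hg⟩
        rw [SetLike.mem_coe, LinearMap.mem_ker, ← Module.End.mul_apply, ← aeval_mul, sq,
          mul_assoc]
        exact hia
      have hiw := hsq i hi hw
      rw [LinearMap.mem_ker, ← Module.End.mul_apply, ← aeval_mul] at hiw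
      exact ih ha ⟨hiw, hg⟩
    · obtain ⟨x, y, hxy⟩ := (hi.coprime_iff_not_dvd).mpr hdvd
      have hsplit : v = aeval f (x * i) v + aeval f (y * a) v := by
        simpa using congr(aeval f $hxy v).symm
      rw [hsplit]
      refine T.add_mem (ih ha ⟨?_, aeval_apply_mem_ker_of_commute hfg _ hg⟩)
        (hker i hi ⟨?_, aeval_apply_mem_ker_of_commute hfg _ hg⟩)
      all_goals rw [SetLike.mem_coe, LinearMap.mem_ker, ← Module.End.mul_apply, ← aeval_mul]
      · exact aeval_apply_eq_zero_of_dvd ⟨x, by ring⟩ hia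
      · exact aeval_apply_eq_zero_of_dvd ⟨y, by ring⟩ hia

end PrimaryDecomposition

section ExpOrbit

variable {V : Type*} [NormedAddCommGroup V] [NormedSpace ℝ V] [CompleteSpace V] (A : V →L[ℝ] V)

theorem eq_exp_smul_apply_of_hasDerivAt {γ : ℝ → V} (hγ : ∀ t, HasDerivAt γ (A (γ t)) t)
    (t : ℝ) : γ t = exp (t • A) (γ 0) := by
  have hderiv : ∀ s, HasDerivAt (fun s : ℝ => exp ((t - s) • A) (γ s)) 0 s := fun s => by
    have hexp := (hasDerivAt_exp_smul_const A (t - s)).scomp s ((hasDerivAt_id s).const_sub t)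
    simpa using hexp.clm_apply (hγ s)
  simpa using is_const_of_deriv_eq_zero (fun s => (hderiv s).differentiableAt)
    (fun s => (hderiv s).deriv) t 0

theorem exp_smul_apply_exp_smul_apply (s t : ℝ) (v : V) :
    exp (s • A) (exp (t • A) v) = exp ((s + t) • A) v := by
  have hγ : ∀ r, HasDerivAt (fun r : ℝ => exp ((r + t) • A) v) (A (exp ((r + t) • A) v)) r := by
    intro r
    have := (hasDerivAt_exp_smul_const' A (r + t)).scomp r ((hasDerivAt_id r).add_const t)
    simpa using this.clm_apply (hasDerivAt_const r v)
  simpa using (eq_exp_smul_apply_of_hasDerivAt A hγ s).symm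

theorem exp_smul_apply_of_apply_eq_smul {y : V} {a : ℝ} (hy : A y = a • y) (t : ℝ) :
    exp (t • A) y = Real.exp (a * t) • y := by
  have hγ : ∀ s, HasDerivAt (fun s => Real.exp (a * s) • y) (A (Real.exp (a * s) • y)) s := by
    intro s
    have := ((hasDerivAt_id s).const_mul a).exp.smul_const y
    simpa [hy, smul_smul, mul_comm] using this
  simpa using (eq_exp_smul_apply_of_hasDerivAt A hγ t).symm

theorem exp_smul_apply_of_quadratic {y : V} {α β : ℝ} (hβ : β ≠ 0)
    (hy : A (A y) - (2 * α) • A y + (α ^ 2 + β ^ 2) • y = 0) (t : ℝ) :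
    exp (t • A) y = Real.exp (α * t) • (cos (β * t) • y + (sin (β * t) / β) • (A y - α • y)) := by
  set γ : ℝ → V := fun s => Real.exp (α * s) •
      (cos (β * s) • y + (sin (β * s) / β) • (A y - α • y))
  have hγ : ∀ s, HasDerivAt γ (A (γ s)) s := by
    intro s
    have hcos := ((hasDerivAt_id s).const_mul β).cos
    have hsin := (((hasDerivAt_id s).const_mul β).sin).div_const β
    have := ((hasDerivAt_id s).const_mul α).exp.smul
      ((hcos.smul_const y).add (hsin.smul_const (A y - α • y)))
    refine this.congr_deriv ?_
    simp only [γ, id, mul_one, Pi.add_apply, map_smul, map_add, map_sub]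
    linear_combination (norm := match_scalars) (-(Real.exp (α * s) * sin (β * s) / β)) • hy
    all_goals field_simp
    all_goals ring
  simpa [γ] using (eq_exp_smul_apply_of_hasDerivAt A hγ t).symm

theorem exp_smul_apply_of_quadratic_sq {y m : V} {ω : ℝ} (hω : ω ≠ 0)
    (hm : A (A y) + ω ^ 2 • y = m) (hAm : A (A m) + ω ^ 2 • m = 0) (t : ℝ) :
    exp (t • A) y = cos (ω * t) • y + (sin (ω * t) / ω) • A y
      + (t * sin (ω * t) / (2 * ω)) • m
      + ((sin (ω * t) - ω * t * cos (ω * t)) / (2 * ω ^ 3)) • A m := by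
  set γ : ℝ → V := fun s => cos (ω * s) • y + (sin (ω * s) / ω) • A y
      + (s * sin (ω * s) / (2 * ω)) • m
      + ((sin (ω * s) - ω * s * cos (ω * s)) / (2 * ω ^ 3)) • A m
  have hγ : ∀ s, HasDerivAt γ (A (γ s)) s := by
    intro s
    have hω' := (hasDerivAt_id s).const_mul ω
    have hcos := hω'.cos
    have hsin := hω'.sin
    have h1 := hcos.smul_const y
    have h2 := (hsin.div_const ω).smul_const (A y)
    have h3 := (((hasDerivAt_id s).mul hsin).div_const (2 * ω)).smul_const m
    have h4 := ((hsin.sub (hω'.mul hcos)).div_const (2 * ω ^ 3)).smul_const (A m)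
    refine (((h1.add h2).add h3).add h4).congr_deriv ?_
    simp only [γ, id, mul_one, one_mul, map_smul, map_add]
    linear_combination (norm := match_scalars)
      (-(sin (ω * s) / ω)) • hm - ((sin (ω * s) - ω * s * cos (ω * s)) / (2 * ω ^ 3)) • hAm
    all_goals field_simp
    all_goals ring
  simpa [γ] using (eq_exp_smul_apply_of_hasDerivAt A hγ t).symm

theorem ker_cosh_eq_ker_exp_neg_two_smul_add_one :
    LinearMap.ker (((1 / 2 : ℝ) • (exp A + exp (-A)) : V →L[ℝ] V) : V →ₗ[ℝ] V)
      = LinearMap.ker ((exp ((-2 : ℝ) • A) + 1 : V →L[ℝ] V) : V →ₗ[ℝ] V) := by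
  ext x
  have hcancel : exp (-A) (exp A x) = x := by
    simpa using exp_smul_apply_exp_smul_apply A (-1) 1 x
  have hneg : exp (-A) (exp (-A) x) = exp ((-2 : ℝ) • A) x := by
    rw [← neg_one_smul ℝ A, exp_smul_apply_exp_smul_apply]
    norm_num
  have hpos : exp A (exp ((-2 : ℝ) • A) x) = exp (-A) x := by
    have h := exp_smul_apply_exp_smul_apply A 1 (-2) x
    rw [one_smul] at h
    rw [h]
    norm_num
  simp only [LinearMap.mem_ker, ContinuousLinearMap.coe_coe, add_apply, smul_apply,
    one_apply_eq_self, smul_eq_zero, one_div, inv_eq_zero, two_ne_zero, false_or]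
  constructor
  · intro h
    have := congr(exp (-A) $h)
    rwa [map_add, hcancel, hneg, map_zero, add_comm] at this
  · intro h
    have := congr(exp A $h)
    rwa [map_add, hpos, map_zero, add_comm] at this

theorem ker_cosh_eq_ker_exp_two_smul_add_one :
    LinearMap.ker (((1 / 2 : ℝ) • (exp A + exp (-A)) : V →L[ℝ] V) : V →ₗ[ℝ] V)
      = LinearMap.ker ((exp ((2 : ℝ) • A) + 1 : V →L[ℝ] V) : V →ₗ[ℝ] V) := by
  simpa [add_comm] using ker_cosh_eq_ker_exp_neg_two_smul_add_one (-A)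

end ExpOrbit

theorem cos_half_odd_mul_pi_mul_two (n : ℕ) : cos (((n : ℝ) + 1 / 2) * π * 2) = -1 :=
  cos_eq_neg_one_iff.mpr ⟨n, by push_cast; ring⟩

theorem sin_half_odd_mul_pi_mul_two (n : ℕ) : sin (((n : ℝ) + 1 / 2) * π * 2) = 0 :=
  sin_eq_zero_iff.mpr ⟨2 * n + 1, by push_cast; ring⟩

theorem eq_zero_and_exists_of_exp_mul_cos_eq_neg_one {α β : ℝ} (hβ : 0 < β)
    (hsin : sin (β * 2) = 0) (hcos : Real.exp (α * 2) * cos (β * 2) = -1) :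
    α = 0 ∧ ∃ n : ℕ, β = ((n : ℝ) + 1 / 2) * π := by
  have hcos' : cos (β * 2) = -1 := by
    rcases sq_eq_one_iff.mp (by nlinarith [sin_sq_add_cos_sq (β * 2)] : cos (β * 2) ^ 2 = 1)
      with h | h
    · nlinarith [Real.exp_pos (α * 2)]
    · exact h
  rw [hcos', mul_neg_one, neg_inj, Real.exp_eq_one_iff] at hcos
  obtain ⟨k, hk⟩ := cos_eq_neg_one_iff.mp hcos'
  lift k to ℕ using (by
    by_contra! hk0
    have : (k : ℝ) ≤ -1 := by exact_mod_cast Int.le_sub_one_of_lt hk0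
    nlinarith [pi_pos])
  exact ⟨by linarith, k, by push_cast at hk; linarith⟩

section ExpTwoSmul

variable {V : Type*} [NormedAddCommGroup V] [NormedSpace ℝ V] {A : V →L[ℝ] V}

theorem apply_ne_smul_of_quadratic {y : V} (hy0 : y ≠ 0) {b c : ℝ} (hdisc : b ^ 2 < 4 * c)
    (hy : A (A y) + b • A y + c • y = 0) (s : ℝ) : A y ≠ s • y := by
  intro hs
  rw [hs, map_smul, hs] at hy
  have h : (s ^ 2 + b * s + c) • y = 0 := by linear_combination (norm := module) hy
  exact hy0 <| (smul_eq_zero.mp h).resolve_left (by nlinarith [sq_nonneg (2 * s + b)])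

theorem aeval_X_sq_add_C_apply (c : ℝ) (v : V) :
    aeval (A : V →ₗ[ℝ] V) (X ^ 2 + C c) v = A (A v) + c • v := by
  simp [sq]

theorem exp_two_smul_apply_of_mem_ker {u : V}
    (hu : u ∈ LinearMap.ker ((exp ((2 : ℝ) • A) + 1 : V →L[ℝ] V) : V →ₗ[ℝ] V)) :
    exp ((2 : ℝ) • A) u = -u := by
  simpa [eq_neg_iff_add_eq_zero] using hu

theorem commute_exp_two_smul_add_one :
    Commute (A : V →ₗ[ℝ] V) ((exp ((2 : ℝ) • A) + 1 : V →L[ℝ] V) : V →ₗ[ℝ] V) :=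
  ((((Commute.refl A).smul_right (2 : ℝ)).exp_right).add_right (Commute.one_right A)).map
    ContinuousLinearMap.toLinearMapRingHom

variable [CompleteSpace V]

theorem eq_zero_of_apply_eq_smul_of_exp_two_smul {y : V} {a : ℝ} (hy : A y = a • y)
    (hexp : exp ((2 : ℝ) • A) y = -y) : y = 0 := by
  rw [exp_smul_apply_of_apply_eq_smul A hy] at hexp
  have h : (Real.exp (a * 2) + 1) • y = 0 := by linear_combination (norm := module) hexp
  exact (smul_eq_zero.mp h).resolve_left (by positivity)

theorem quadratic_eq_of_exp_two_smul {y : V} (hy0 : y ≠ 0) {b c : ℝ} (hdisc : b ^ 2 < 4 * c)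
    (hy : A (A y) + b • A y + c • y = 0) (hexp : exp ((2 : ℝ) • A) y = -y) :
    b = 0 ∧ ∃ n : ℕ, c = ((n : ℝ) + 1 / 2) ^ 2 * π ^ 2 := by
  set α := -b / 2 with hα
  set β := √(c - b ^ 2 / 4)
  have hβ : 0 < β := sqrt_pos.mpr (by linarith)
  have hβ2 : β ^ 2 = c - b ^ 2 / 4 := sq_sqrt (by linarith)
  have hy' : A (A y) - (2 * α) • A y + (α ^ 2 + β ^ 2) • y = 0 := by
    rw [← hy, hβ2]; module
  rw [exp_smul_apply_of_quadratic A hβ.ne' hy'] at hexp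
  set k := Real.exp (α * 2) * (sin (β * 2) / β)
  set r := k * α - Real.exp (α * 2) * cos (β * 2) - 1
  have hkAy : k • A y = r • y := by linear_combination (norm := module) hexp
  have hk : k = 0 := by
    by_contra hk
    refine apply_ne_smul_of_quadratic hy0 hdisc hy (k⁻¹ * r) ?_
    rw [mul_smul, ← hkAy, inv_smul_smul₀ hk]
  have hsin : sin (β * 2) = 0 := by
    simpa [k, (Real.exp_pos _).ne', hβ.ne'] using hk
  have hcos : Real.exp (α * 2) * cos (β * 2) = -1 := by
    rw [hsin] at hexp
    have h : (Real.exp (α * 2) * cos (β * 2) + 1) • y = 0 := by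
      linear_combination (norm := module) hexp
    linarith [(smul_eq_zero.mp h).resolve_right hy0]
  obtain ⟨hα, n, hn⟩ := eq_zero_and_exists_of_exp_mul_cos_eq_neg_one hβ hsin hcos
  have hb : b = 0 := by linarith
  refine ⟨hb, n, ?_⟩
  rw [← mul_pow, ← hn, hβ2, hb]
  ring

theorem exp_two_smul_apply_of_quadratic (n : ℕ) {y : V}
    (hy : A (A y) + (((n : ℝ) + 1 / 2) * π) ^ 2 • y = 0) : exp ((2 : ℝ) • A) y = -y := by
  have hω : ((n : ℝ) + 1 / 2) * π ≠ 0 := by positivity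
  rw [exp_smul_apply_of_quadratic A (α := 0) hω (by simpa using hy),
    cos_half_odd_mul_pi_mul_two, sin_half_odd_mul_pi_mul_two]
  simp

theorem eq_zero_of_quadratic_sq_of_exp_two_smul (n : ℕ) {y m : V}
    (hm : A (A y) + (((n : ℝ) + 1 / 2) * π) ^ 2 • y = m)
    (hAm : A (A m) + (((n : ℝ) + 1 / 2) * π) ^ 2 • m = 0) (hexp : exp ((2 : ℝ) • A) y = -y) :
    m = 0 := by
  set ω := ((n : ℝ) + 1 / 2) * π
  have hω : ω ≠ 0 := by positivity
  rw [exp_smul_apply_of_quadratic_sq A hω hm hAm, cos_half_odd_mul_pi_mul_two,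
    sin_half_odd_mul_pi_mul_two] at hexp
  have hA : A m = 0 := by
    have h : (ω ^ 2)⁻¹ • A m = 0 := by
      linear_combination (norm := skip) hexp
      match_scalars <;> field_simp <;> ring
    simpa [hω] using h
  simpa [hA, hω] using hAm

theorem exists_associated_of_aeval_apply_eq_zero {i : ℝ[X]} (hi : Irreducible i) {u : V}
    (hu : u ≠ 0) (hexp : exp ((2 : ℝ) • A) u = -u) (hiu : aeval (A : V →ₗ[ℝ] V) i u = 0) :
    ∃ n : ℕ, Associated i (X ^ 2 + C (((n : ℝ) + 1 / 2) ^ 2 * π ^ 2)) := by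
  classical
  have hp : Irreducible (normalize i) := (associated_normalize i).irreducible hi
  have hpu : aeval (A : V →ₗ[ℝ] V) (normalize i) u = 0 :=
    aeval_apply_eq_zero_of_dvd (associated_normalize i).dvd hiu
  have hdeg : IsMonicOfDegree (normalize i) 1 ∨ IsMonicOfDegree (normalize i) 2 := by
    have hm := monic_normalize hi.ne_zero
    have := hp.natDegree_pos
    have := hp.natDegree_le_two
    interval_cases h : (normalize i).natDegree
    exacts [Or.inl ⟨h, hm⟩, Or.inr ⟨h, hm⟩]
  rcases hdeg with hdeg | hdeg
  · obtain ⟨r, hr⟩ := isMonicOfDegree_one_iff.mp hdeg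
    rw [hr] at hpu
    refine absurd (eq_zero_of_apply_eq_smul_of_exp_two_smul (a := -r) ?_ hexp) hu
    simp only [map_add, aeval_X, aeval_C, LinearMap.add_apply, ContinuousLinearMap.coe_coe,
      Module.algebraMap_end_apply] at hpu
    rw [neg_smul, eq_neg_iff_add_eq_zero, hpu]
  · obtain ⟨b, c, hbc⟩ := isMonicOfDegree_two_iff.mp hdeg
    have hdisc : b ^ 2 < 4 * c := by
      by_contra! h
      obtain ⟨x, hx⟩ := exists_quadratic_eq_zero one_ne_zero
        ⟨√(discrim 1 b c), by rw [← sq, sq_sqrt (by rw [discrim]; linarith)]⟩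
      have := degree_eq_one_of_irreducible_of_root hp (x := x) (by
        simp only [hbc, IsRoot.def, eval_add, eval_pow, eval_X, eval_mul, eval_C]
        linarith)
      rw [degree_eq_natDegree hp.ne_zero, hdeg.natDegree_eq] at this
      norm_num at this
    rw [hbc] at hpu
    simp only [sq, map_add, map_mul, aeval_X, aeval_C, LinearMap.add_apply, Module.End.mul_apply,
      ContinuousLinearMap.coe_coe, Module.algebraMap_end_apply] at hpu
    obtain ⟨rfl, n, rfl⟩ := quadratic_eq_of_exp_two_smul hu hdisc hpu hexp
    exact ⟨n, (associated_normalize i).trans (by simp [hbc])⟩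

theorem ker_aeval_inf_ker_exp_two_smul_add_one_le {i : ℝ[X]} (hi : Irreducible i) :
    LinearMap.ker (aeval (A : V →ₗ[ℝ] V) i)
        ⊓ LinearMap.ker ((exp ((2 : ℝ) • A) + 1 : V →L[ℝ] V) : V →ₗ[ℝ] V)
      ≤ ⨆ n : ℕ,
          LinearMap.ker (aeval (A : V →ₗ[ℝ] V) (X ^ 2 + C (((n : ℝ) + 1 / 2) ^ 2 * π ^ 2))) := by
  rintro u ⟨hiu, hu⟩
  rcases eq_or_ne u 0 with rfl | hu0
  · exact Submodule.zero_mem _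
  obtain ⟨n, hn⟩ := exists_associated_of_aeval_apply_eq_zero hi hu0
    (exp_two_smul_apply_of_mem_ker hu) hiu
  exact Submodule.mem_iSup_of_mem n (aeval_apply_eq_zero_of_dvd hn.dvd hiu)

theorem ker_aeval_sq_inf_ker_exp_two_smul_add_one_le {i : ℝ[X]} (hi : Irreducible i) :
    LinearMap.ker (aeval (A : V →ₗ[ℝ] V) (i ^ 2))
        ⊓ LinearMap.ker ((exp ((2 : ℝ) • A) + 1 : V →L[ℝ] V) : V →ₗ[ℝ] V)
      ≤ LinearMap.ker (aeval (A : V →ₗ[ℝ] V) i) := by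
  rintro w ⟨hw, hwg⟩
  rw [SetLike.mem_coe, LinearMap.mem_ker] at hw
  set u := aeval (A : V →ₗ[ℝ] V) i w
  by_contra hu0
  have hiu : aeval (A : V →ₗ[ℝ] V) i u = 0 := by
    rwa [← Module.End.mul_apply, ← aeval_mul, ← sq]
  obtain ⟨n, hn⟩ := exists_associated_of_aeval_apply_eq_zero hi hu0
    (exp_two_smul_apply_of_mem_ker
      (aeval_apply_mem_ker_of_commute commute_exp_two_smul_add_one i hwg)) hiu
  set q := X ^ 2 + C (((n : ℝ) + 1 / 2) ^ 2 * π ^ 2)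
  have hq2 : aeval (A : V →ₗ[ℝ] V) q (aeval (A : V →ₗ[ℝ] V) q w) = 0 := by
    rw [← Module.End.mul_apply, ← aeval_mul, ← sq]
    exact aeval_apply_eq_zero_of_dvd (pow_dvd_pow_of_dvd hn.dvd 2) hw
  have hqw : aeval (A : V →ₗ[ℝ] V) q w = 0 := by
    simp only [q, aeval_X_sq_add_C_apply, ← mul_pow] at hq2 ⊢
    exact eq_zero_of_quadratic_sq_of_exp_two_smul n rfl hq2 (exp_two_smul_apply_of_mem_ker hwg)
  exact hu0 (aeval_apply_eq_zero_of_dvd hn.symm.dvd hqw)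

end ExpTwoSmul

theorem ker_cosh
    {V : Type*} [NormedAddCommGroup V] [NormedSpace ℝ V] [FiniteDimensional ℝ V]
    (A : V →L[ℝ] V) :
    LinearMap.ker (((1 / 2 : ℝ) • (NormedSpace.exp A + NormedSpace.exp (-A)) : V →L[ℝ] V) : V →ₗ[ℝ] V)
        = LinearMap.ker ((NormedSpace.exp ((-2 : ℝ) • A) + (1 : V →L[ℝ] V) : V →L[ℝ] V) : V →ₗ[ℝ] V) ∧
    LinearMap.ker (((1 / 2 : ℝ) • (NormedSpace.exp A + NormedSpace.exp (-A)) : V →L[ℝ] V) : V →ₗ[ℝ] V)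
        = ⨆ n : ℕ,
            LinearMap.ker ((A ^ 2 + (((n : ℝ) + 1 / 2) ^ 2 * π ^ 2) • (1 : V →L[ℝ] V) : V →L[ℝ] V) : V →ₗ[ℝ] V) := by
  have hq (n : ℕ) : ((A ^ 2 + (((n : ℝ) + 1 / 2) ^ 2 * π ^ 2) • (1 : V →L[ℝ] V) : V →L[ℝ] V)
      : V →ₗ[ℝ] V) = aeval (A : V →ₗ[ℝ] V) (X ^ 2 + C (((n : ℝ) + 1 / 2) ^ 2 * π ^ 2)) := by
    ext v
    rw [aeval_X_sq_add_C_apply]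
    rfl
  refine ⟨ker_cosh_eq_ker_exp_neg_two_smul_add_one A, ?_⟩
  simp only [ker_cosh_eq_ker_exp_two_smul_add_one, hq]
  refine le_antisymm ?_ (iSup_le fun n v hv => ?_)
  · simpa [minpoly.aeval] using ker_aeval_inf_ker_le (commute_exp_two_smul_add_one (A := A))
      (fun _ => ker_aeval_inf_ker_exp_two_smul_add_one_le)
      (fun _ => ker_aeval_sq_inf_ker_exp_two_smul_add_one_le)
      (minpoly.ne_zero (IsIntegral.of_finite ℝ (A : V →ₗ[ℝ] V)))
  · rw [LinearMap.mem_ker, aeval_X_sq_add_C_apply, ← mul_pow] at hv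
    simpa [eq_neg_iff_add_eq_zero] using exp_two_smul_apply_of_quadratic n hv
end

section
/- Let V be a nonzero finite-dimensional complex vector space and A a linear endomorphism of V. Then: (a) the operator ∑_{k=0}^∞ (1/(2k+1)!)·A^{2k} (representing sinh(A)/A) is invertible if and only if the spectrum of A contains no element of πi·ℤ except possibly 0, i.e. Spec(A) ∩ πi·ℤ ⊆ {0}; (b) the operator cosh A = ½(exp(A) + exp(−A)) is invertible if and only if Spec(A) ∩ (π/2 + π·ℤ)·i = ∅. -/
/-!
Both operators are convergent power series in `A`, so they commute with `A` and act on an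
eigenvector of `A` with eigenvalue `μ` as multiplication by `sinh μ / μ`, resp. `cosh μ`.
An operator commuting with `A` has an `A`-invariant kernel, which, if nonzero, contains an
eigenvector of `A`; so it is invertible iff it kills no eigenvector of `A`. It remains to locate
the zeros of `sinh z / z` (namely `πiℤ \ {0}`) and of `cosh z` (namely `(π/2 + πℤ)i`).
-/

open scoped Real
open scoped Nat

section CommonEigenvector

variable {K V : Type*} [Field K] [IsAlgClosed K] [AddCommGroup V] [Module K V]
  [FiniteDimensional K V]

theorem Module.End.exists_eigenvector_mem_ker_of_commute {A B : Module.End K V}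
    (hAB : Commute A B) (hB : LinearMap.ker B ≠ ⊥) :
    ∃ μ : K, ∃ v : V, v ≠ 0 ∧ A v = μ • v ∧ B v = 0 := by
  have hA : ∀ v ∈ LinearMap.ker B, A v ∈ LinearMap.ker B := fun v hv => by
    rw [LinearMap.mem_ker] at hv ⊢
    rw [← Module.End.mul_apply, ← hAB.eq, Module.End.mul_apply, hv, map_zero]
  have := Submodule.nontrivial_iff_ne_bot.mpr hB
  obtain ⟨μ, hμ⟩ := Module.End.exists_eigenvalue (A.restrict hA)
  obtain ⟨v, hv⟩ := hμ.exists_hasEigenvector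
  exact ⟨μ, v, by simpa using hv.2, congrArg Subtype.val hv.apply_eq_smul, v.2⟩

theorem Module.End.isUnit_iff_forall_eigenvalue {A B : Module.End K V} (hAB : Commute A B)
    (f : K → K) (hB : ∀ μ v, A v = μ • v → B v = f μ • v) :
    IsUnit B ↔ ∀ μ, (∃ v, v ≠ 0 ∧ A v = μ • v) → f μ ≠ 0 := by
  rw [LinearMap.isUnit_iff_ker_eq_bot]
  constructor
  · rintro hker μ ⟨v, hv, hAv⟩ hfμ
    refine hv (LinearMap.ker_eq_bot'.mp hker v ?_)
    rw [hB μ v hAv, hfμ, zero_smul]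
  · intro h
    by_contra hker
    obtain ⟨μ, v, hv, hAv, hBv⟩ := exists_eigenvector_mem_ker_of_commute hAB hker
    rw [hB μ v hAv] at hBv
    exact h μ ⟨v, hv, hAv⟩ ((smul_eq_zero.mp hBv).resolve_right hv)

end CommonEigenvector

namespace ContinuousLinearMap

variable {𝕜 E : Type*} [NontriviallyNormedField 𝕜] [NormedAddCommGroup E] [NormedSpace 𝕜 E]

theorem isUnit_iff_forall_eigenvalue [IsAlgClosed 𝕜] [CompleteSpace 𝕜] [FiniteDimensional 𝕜 E]
    {A B : E →L[𝕜] E} (hAB : Commute A B)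
    (f : 𝕜 → 𝕜) (hB : ∀ μ v, A v = μ • v → B v = f μ • v) :
    IsUnit B ↔ ∀ μ, (∃ v, v ≠ 0 ∧ A v = μ • v) → f μ ≠ 0 := by
  have := FiniteDimensional.complete 𝕜 E
  rw [isUnit_iff_isUnit_toLinearMap]
  exact Module.End.isUnit_iff_forall_eigenvalue (hAB.map toLinearMapRingHom) f hB

theorem pow_apply_of_apply_eq_smul {A : E →L[𝕜] E} {μ : 𝕜} {v : E} (hv : A v = μ • v) (n : ℕ) :
    (A ^ n) v = μ ^ n • v := by
  induction n with
  | zero => simp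
  | succ n ih => rw [pow_succ', mul_apply_eq_comp, ih, map_smul, hv, smul_smul, pow_succ]

end ContinuousLinearMap

theorem HasSum.apply_eq_smul_of_forall {ι 𝕜 E F : Type*} [NontriviallyNormedField 𝕜]
    [NormedAddCommGroup E] [NormedSpace 𝕜 E] [NormedAddCommGroup F] [NormedSpace 𝕜 F]
    {T : ι → E →L[𝕜] F} {a : ι → 𝕜} {B : E →L[𝕜] F} {b : 𝕜} {v : E} {w : F}
    (hT : HasSum T B) (ha : HasSum a b) (h : ∀ i, T i v = a i • w) : B v = b • w :=
  (hT.mapL (ContinuousLinearMap.apply 𝕜 F v)).unique (by simpa [h] using ha.smul_const w)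

section Sinhc

variable {𝔸 : Type*} [NormedRing 𝔸] [NormedAlgebra ℂ 𝔸]

/-- `sinh x / x`, defined by its power series, so that `sinhc 0 = 1`. -/
noncomputable def sinhc (x : 𝔸) : 𝔸 := ∑' k : ℕ, ((2 * k + 1)! : ℂ)⁻¹ • x ^ (2 * k)

theorem summable_sinhc [CompleteSpace 𝔸] (x : 𝔸) :
    Summable fun k : ℕ => ((2 * k + 1)! : ℂ)⁻¹ • x ^ (2 * k) := by
  have hexp := (NormedSpace.norm_expSeries_summable' (𝕂 := ℂ) x).comp_injective
    (mul_right_injective₀ two_ne_zero)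
  refine hexp.of_norm_bounded fun k => ?_
  simp only [Function.comp_apply, norm_smul, norm_inv, Complex.norm_natCast]
  gcongr
  omega

theorem hasSum_sinhc [CompleteSpace 𝔸] (x : 𝔸) :
    HasSum (fun k : ℕ => ((2 * k + 1)! : ℂ)⁻¹ • x ^ (2 * k)) (sinhc x) :=
  (summable_sinhc x).hasSum

theorem sinhc_zero : sinhc (0 : 𝔸) = 1 := by
  rw [sinhc, tsum_eq_single 0 fun k hk => by simp [hk]]
  simp

theorem commute_sinhc (x : 𝔸) : Commute x (sinhc x) :=
  Commute.tsum_right x fun _ => ((Commute.refl x).pow_right _).smul_right _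

end Sinhc

namespace ContinuousLinearMap

variable {E : Type*} [NormedAddCommGroup E] [NormedSpace ℂ E] [CompleteSpace E]

theorem sinhc_apply_of_apply_eq_smul {A : E →L[ℂ] E} {μ : ℂ} {v : E} (hv : A v = μ • v) :
    sinhc A v = sinhc μ • v :=
  (hasSum_sinhc A).apply_eq_smul_of_forall (hasSum_sinhc μ) fun k => by
    rw [smul_apply, pow_apply_of_apply_eq_smul hv, smul_smul, smul_eq_mul]

theorem exp_apply_of_apply_eq_smul {A : E →L[ℂ] E} {μ : ℂ} {v : E} (hv : A v = μ • v) :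
    NormedSpace.exp A v = Complex.exp μ • v := by
  rw [Complex.exp_eq_exp_ℂ]
  exact (NormedSpace.exp_series_hasSum_exp' (𝕂 := ℂ) A).apply_eq_smul_of_forall
    (NormedSpace.exp_series_hasSum_exp' μ) fun k => by
      rw [smul_apply, pow_apply_of_apply_eq_smul hv, smul_smul, smul_eq_mul]

end ContinuousLinearMap

namespace Complex

theorem mul_sinhc (z : ℂ) : z * sinhc z = sinh z := by
  have h : (fun k : ℕ => z * (((2 * k + 1)! : ℂ)⁻¹ • z ^ (2 * k))) =
      fun k => z ^ (2 * k + 1) / (2 * k + 1)! := by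
    ext k
    rw [smul_eq_mul, pow_succ]
    ring
  exact ((hasSum_sinhc z).mul_left z).unique (h ▸ hasSum_sinh z)

theorem sinh_eq_zero_iff {z : ℂ} : sinh z = 0 ↔ ∃ n : ℤ, z = π * I * n := by
  rw [← mul_eq_zero_iff_right I_ne_zero, ← sin_mul_I, sin_eq_zero_iff]
  constructor
  · rintro ⟨k, hk⟩
    refine ⟨-k, ?_⟩
    push_cast
    linear_combination (-I) * hk + z * I_sq
  · rintro ⟨n, rfl⟩
    exact ⟨-n, by push_cast; linear_combination (π * n : ℂ) * I_sq⟩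

theorem sinhc_eq_zero_iff {z : ℂ} : sinhc z = 0 ↔ (∃ n : ℤ, z = π * I * n) ∧ z ≠ 0 := by
  rcases eq_or_ne z 0 with rfl | hz
  · simp [sinhc_zero]
  · rw [← mul_eq_zero_iff_left hz, mul_sinhc, sinh_eq_zero_iff]
    simp [hz]

theorem cosh_eq_zero_iff {z : ℂ} : cosh z = 0 ↔ ∃ n : ℤ, z = (π / 2 + π * n) * I := by
  rw [← cos_mul_I, cos_eq_zero_iff]
  constructor
  · rintro ⟨k, hk⟩
    refine ⟨-k - 1, ?_⟩
    push_cast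
    linear_combination (-I) * hk + z * I_sq
  · rintro ⟨n, rfl⟩
    refine ⟨-n - 1, ?_⟩
    push_cast
    linear_combination (π / 2 + π * n : ℂ) * I_sq

end Complex

open ContinuousLinearMap NormedSpace in
theorem invertibility_of_sinhc_and_cosh_general
    {V : Type*} [NormedAddCommGroup V] [NormedSpace ℂ V] [FiniteDimensional ℂ V]
    (A : V →L[ℂ] V) :
    -- (a) sinh(A)/A is invertible iff Spec(A) ∩ πiℤ ⊆ {0}
    (IsUnit (∑' k : ℕ, ((Nat.factorial (2 * k + 1) : ℂ))⁻¹ • A ^ (2 * k)) ↔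
      {μ : ℂ | ∃ v : V, v ≠ 0 ∧ A v = μ • v}
          ∩ {μ : ℂ | ∃ n : ℤ, μ = (π : ℂ) * Complex.I * n} ⊆ {0}) ∧
    -- (b) cosh A is invertible iff Spec(A) ∩ (π/2 + πℤ)i = ∅
    (IsUnit ((1 / 2 : ℂ) • (NormedSpace.exp A + NormedSpace.exp (-A))) ↔
      {μ : ℂ | ∃ v : V, v ≠ 0 ∧ A v = μ • v}
          ∩ {μ : ℂ | ∃ n : ℤ, μ = ((π : ℂ) / 2 + (π : ℂ) * n) * Complex.I} = ∅) := by
  have := FiniteDimensional.complete ℂ V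
  constructor
  · change IsUnit (sinhc A) ↔ _
    rw [isUnit_iff_forall_eigenvalue (commute_sinhc A) sinhc
      fun μ v hv => sinhc_apply_of_apply_eq_smul hv]
    simp only [Set.subset_def, Set.mem_inter_iff, Set.mem_ofPred_eq, Set.mem_singleton_iff,
      ne_eq, Complex.sinhc_eq_zero_iff, not_and_not_right, and_imp]
  · have hcomm : Commute A ((1 / 2 : ℂ) • (exp A + exp (-A))) :=
      ((Commute.refl A).exp_right.add_right (Commute.refl A).neg_right.exp_right).smul_right _
    have hcosh (μ : ℂ) (v : V) (hv : A v = μ • v) :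
        ((1 / 2 : ℂ) • (exp A + exp (-A))) v = Complex.cosh μ • v := by
      have hv' : (-A) v = -μ • v := by rw [neg_apply, hv, neg_smul]
      rw [smul_apply, add_apply, exp_apply_of_apply_eq_smul hv, exp_apply_of_apply_eq_smul hv',
        ← add_smul, smul_smul, Complex.cosh]
      ring_nf
    rw [isUnit_iff_forall_eigenvalue hcomm Complex.cosh hcosh, Set.eq_empty_iff_forall_notMem]
    simp only [Set.mem_inter_iff, Set.mem_ofPred_eq, ← Complex.cosh_eq_zero_iff, not_and]

theorem invertibility_of_sinhc_and_cosh
    {V : Type*} [NormedAddCommGroup V] [NormedSpace ℂ V] [FiniteDimensional ℂ V]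
    [Nontrivial V] (A : V →L[ℂ] V) :
    -- (a) sinh(A)/A is invertible iff Spec(A) ∩ πiℤ ⊆ {0}
    (IsUnit (∑' k : ℕ, ((Nat.factorial (2 * k + 1) : ℂ))⁻¹ • A ^ (2 * k)) ↔
      {μ : ℂ | ∃ v : V, v ≠ 0 ∧ A v = μ • v}
          ∩ {μ : ℂ | ∃ n : ℤ, μ = (π : ℂ) * Complex.I * n} ⊆ {0}) ∧
    -- (b) cosh A is invertible iff Spec(A) ∩ (π/2 + πℤ)i = ∅
    (IsUnit ((1 / 2 : ℂ) • (NormedSpace.exp A + NormedSpace.exp (-A))) ↔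
      {μ : ℂ | ∃ v : V, v ≠ 0 ∧ A v = μ • v}
          ∩ {μ : ℂ | ∃ n : ℤ, μ = ((π : ℂ) / 2 + (π : ℂ) * n) * Complex.I} = ∅) :=
  invertibility_of_sinhc_and_cosh_general A
end

section
/- In ℝ⁴, let D = {x ∈ ℝ⁴ : x₁ ≥ 0, x₂ ≥ 0, x₃ ≤ 0, x₄ ≤ 0} and let K be the convex cone generated by D together with the two vectors (2,2,1,−5) and (2,2,−5,1). Then every element x of the topological closure of K satisfies x₁ ≥ 0 and x₂ ≥ 0; in particular, the vector (−1,5,−2,−2) does not belong to K. (Here (2,2,−5,1) is the image of z = (2,2,1,−5) under the Weyl group 𝒲_k ≅ S₂ × S₂ permuting the first two and the last two coordinates, and (−1,5,−2,−2) = −τ_h(z) where −τ_h sends (x₁,x₂,x₃,x₄) to (−x₃,−x₄,−x₁,−x₂); this shows the existence of an invariant cone C with minimal cone ⊆ C ⊆ maximal cone that is not invariant under −τ_h.) -/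
/-!
Both coordinate functionals `x ↦ x 0` and `x ↦ x 1` are nonnegative on every generator, so the
whole cone lies in their dual cone, which is closed. The vector `(-1, 5, -2, -2)` is outside it.
-/

/-- The convex cone generated by a subset `S` of `ℝ⁴`: the smallest subset
containing `S` stable under addition and multiplication by nonnegative scalars. -/
def generatedCone (S : Set (Fin 4 → ℝ)) : Set (Fin 4 → ℝ) :=
  ⋂₀ {T : Set (Fin 4 → ℝ) | S ⊆ T ∧
    (∀ x ∈ T, ∀ y ∈ T, x + y ∈ T) ∧
    (∀ r : ℝ, 0 ≤ r → ∀ x ∈ T, r • x ∈ T)}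

lemma generatedCone_subset {S : Set (Fin 4 → ℝ)} {C : PointedCone ℝ (Fin 4 → ℝ)}
    (hS : S ⊆ C) : generatedCone S ⊆ C :=
  Set.sInter_subset_of_mem
    ⟨hS, fun _ hx _ hy => C.add_mem hx hy, fun _ hr _ hx => C.smul_mem hr hx⟩

lemma closure_generatedCone_subset {S : Set (Fin 4 → ℝ)} {C : PointedCone ℝ (Fin 4 → ℝ)}
    (hC : IsClosed (C : Set (Fin 4 → ℝ))) (hS : S ⊆ C) : closure (generatedCone S) ⊆ C :=
  hC.closure_subset_iff.2 (generatedCone_subset hS)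

def firstTwoCoordsNonnegCone : PointedCone ℝ (Fin 4 → ℝ) :=
  PointedCone.dual .id {LinearMap.proj 0, LinearMap.proj 1}

lemma mem_firstTwoCoordsNonnegCone {x : Fin 4 → ℝ} :
    x ∈ firstTwoCoordsNonnegCone ↔ 0 ≤ x 0 ∧ 0 ≤ x 1 := by
  simp [firstTwoCoordsNonnegCone]

lemma isClosed_firstTwoCoordsNonnegCone :
    IsClosed (firstTwoCoordsNonnegCone : Set (Fin 4 → ℝ)) :=
  PointedCone.isClosed_dual fun φ => LinearMap.continuous_of_finiteDimensional φ

lemma generators_subset_firstTwoCoordsNonnegCone :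
    {x : Fin 4 → ℝ | 0 ≤ x 0 ∧ 0 ≤ x 1 ∧ x 2 ≤ 0 ∧ x 3 ≤ 0} ∪ {![2, 2, 1, -5], ![2, 2, -5, 1]} ⊆
      (firstTwoCoordsNonnegCone : Set (Fin 4 → ℝ)) := by
  rintro x (⟨h0, h1, -, -⟩ | rfl | rfl)
  · exact mem_firstTwoCoordsNonnegCone.2 ⟨h0, h1⟩
  all_goals exact mem_firstTwoCoordsNonnegCone.2 (by norm_num)

theorem cone_not_tau_invariant :
    (∀ x ∈ closure (generatedCone
        ({x : Fin 4 → ℝ | 0 ≤ x 0 ∧ 0 ≤ x 1 ∧ x 2 ≤ 0 ∧ x 3 ≤ 0} ∪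
          {![2, 2, 1, -5], ![2, 2, -5, 1]})),
      0 ≤ x 0 ∧ 0 ≤ x 1) ∧
    ![(-1 : ℝ), 5, -2, -2] ∉ generatedCone
        ({x : Fin 4 → ℝ | 0 ≤ x 0 ∧ 0 ≤ x 1 ∧ x 2 ≤ 0 ∧ x 3 ≤ 0} ∪
          {![2, 2, 1, -5], ![2, 2, -5, 1]}) := by
  have hK := closure_generatedCone_subset isClosed_firstTwoCoordsNonnegCone
    generators_subset_firstTwoCoordsNonnegCone
  refine ⟨fun x hx => mem_firstTwoCoordsNonnegCone.1 (hK hx), fun hmem => ?_⟩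
  have := (mem_firstTwoCoordsNonnegCone.1 (hK (subset_closure hmem))).1
  norm_num at this
end
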